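/- arXiv:1601.02234 — 5 statements merged into one kernel-verified Lean document; each statement's English description precedes it below -/
import Mathlib

section
/- If G is a hypo-unique-domination graph (G has at least two minimum dominating sets, but for every vertex v, G−v has a unique minimum dominating set), then G is connected. -/
open SimpleGraph

variable {V : Type*}

/-- `D` is a dominating set of `G`. -/
def IsDomSet (G : SimpleGraph V) (D : Finset V) : Prop :=
  ∀ v : V, ∃ u ∈ D, u = v ∨ G.Adj u v

/-- The domination number `γ(G)`. -/
noncomputable def domNum (G : SimpleGraph V) : ℕ :=
  sInf {n | ∃ D : Finset V, IsDomSet G D ∧ D.card = n}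

/-- `D` is a minimum dominating set (γ-set) of `G`. -/
def IsGammaSet (G : SimpleGraph V) (D : Finset V) : Prop :=
  IsDomSet G D ∧ D.card = domNum G

/-- The graph `G - x` obtained by deleting the vertex `x`. -/
def vdel (G : SimpleGraph V) (x : V) : SimpleGraph {u : V // u ≠ x} :=
  SimpleGraph.comap Subtype.val G

/-- `G` is a hypo-unique-domination graph: `G` has at least two γ-sets,
but `G - x` has a unique γ-set for every vertex `x`. -/
def HypoUD (G : SimpleGraph V) : Prop :=
  (∃ D₁ D₂ : Finset V, IsGammaSet G D₁ ∧ IsGammaSet G D₂ ∧ D₁ ≠ D₂) ∧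
  ∀ x : V, ∃! D : Finset {u : V // u ≠ x}, IsGammaSet (vdel G x) D

/-- `D` is an efficient dominating set of `G`: every vertex is dominated exactly once. -/
def IsEDS (G : SimpleGraph V) (D : Finset V) : Prop :=
  ∀ v : V, ∃! u : V, u ∈ D ∧ (u = v ∨ G.Adj u v)

/-- `G` is a hypo-efficient-domination graph: `G` has no EDS,
but `G - x` has an EDS for every vertex `x`. -/
def HypoED (G : SimpleGraph V) : Prop :=
  (¬ ∃ D : Finset V, IsEDS G D) ∧
  ∀ x : V, ∃ D : Finset {u : V // u ≠ x}, IsEDS (vdel G x) D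

open scoped Classical

/-- canonical union -/
noncomputable def unn (A B : Finset V) : Finset V := A ∪ B

lemma mem_unn {A B : Finset V} {a : V} : a ∈ unn A B ↔ a ∈ A ∨ a ∈ B :=
  Finset.mem_union

/-- canonical filter of a finset by a set -/
noncomputable def fil (S : Set V) (D : Finset V) : Finset V := D.filter (· ∈ S)

lemma mem_fil {S : Set V} {D : Finset V} {a : V} : a ∈ fil S D ↔ a ∈ D ∧ a ∈ S :=
  Finset.mem_filter

lemma fil_card_add {S : Set V} (D : Finset V) :
    (fil S D).card + (fil Sᶜ D).card = D.card := by
  have h : fil Sᶜ D = D.filter (fun a => ¬ a ∈ S) := by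
    ext a; simp [fil, Finset.mem_filter]
  rw [h]
  have h2 : fil S D = D.filter (fun a => a ∈ S) := rfl
  rw [h2]
  exact Finset.card_filter_add_card_filter_not _

/-- canonical subtype restriction -/
noncomputable def subt (x : V) (D : Finset V) : Finset {u : V // u ≠ x} :=
  D.subtype (· ≠ x)

lemma mem_subt {x : V} {D : Finset V} {a : {u : V // u ≠ x}} :
    a ∈ subt x D ↔ ↑a ∈ D := Finset.mem_subtype

lemma subt_card {x : V} {D : Finset V} (h : ∀ u ∈ D, u ≠ x) :
    (subt x D).card = D.card := by
  rw [subt, Finset.card_subtype]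
  congr 1
  exact Finset.filter_true_of_mem h

lemma subt_inj {x : V} {D₁ D₂ : Finset V} (h₁ : ∀ u ∈ D₁, u ≠ x) (h₂ : ∀ u ∈ D₂, u ≠ x)
    (h : subt x D₁ = subt x D₂) : D₁ = D₂ := by
  have := congrArg (Finset.map (Function.Embedding.subtype (· ≠ x))) h
  rwa [subt, subt, Finset.subtype_map, Finset.subtype_map,
    Finset.filter_true_of_mem h₁, Finset.filter_true_of_mem h₂] at this

/-- `D` dominates the part `S` from within `S`. -/
def PartDom (G : SimpleGraph V) (S : Set V) (D : Finset V) : Prop :=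
  (∀ u ∈ D, u ∈ S) ∧ ∀ v ∈ S, ∃ u ∈ D, u = v ∨ G.Adj u v

noncomputable def partNum (G : SimpleGraph V) (S : Set V) : ℕ :=
  sInf {n | ∃ D : Finset V, PartDom G S D ∧ D.card = n}

/-- `S` is closed under adjacency. -/
def Closed (G : SimpleGraph V) (S : Set V) : Prop :=
  ∀ ⦃a b : V⦄, G.Adj a b → a ∈ S → b ∈ S

lemma Closed.compl {G : SimpleGraph V} {S : Set V} (hS : Closed G S) :
    Closed G Sᶜ := fun a b hab ha hb => ha (hS hab.symm hb)

lemma exists_part_min (G : SimpleGraph V) [Fintype V] (S : Set V) :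
    ∃ D : Finset V, PartDom G S D ∧ D.card = partNum G S := by
  have hne : {n | ∃ D : Finset V, PartDom G S D ∧ D.card = n}.Nonempty := by
    refine ⟨_, Finset.univ.filter (· ∈ S), ⟨fun u hu => (Finset.mem_filter.1 hu).2,
      fun v hv => ⟨v, Finset.mem_filter.2 ⟨Finset.mem_univ v, hv⟩, Or.inl rfl⟩⟩, rfl⟩
  exact Nat.sInf_mem hne

lemma partNum_le {G : SimpleGraph V} {S : Set V} {D : Finset V} (h : PartDom G S D) :
    partNum G S ≤ D.card := Nat.sInf_le ⟨D, h, rfl⟩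

lemma exists_gamma (G : SimpleGraph V) [Fintype V] :
    ∃ D : Finset V, IsGammaSet G D := by
  have hne : {n | ∃ D : Finset V, IsDomSet G D ∧ D.card = n}.Nonempty :=
    ⟨_, Finset.univ, fun v => ⟨v, Finset.mem_univ v, Or.inl rfl⟩, rfl⟩
  obtain ⟨D, hD, hc⟩ := Nat.sInf_mem hne
  exact ⟨D, hD, hc⟩

lemma domNum_le {G : SimpleGraph V} {D : Finset V} (h : IsDomSet G D) :
    domNum G ≤ D.card := Nat.sInf_le ⟨D, h, rfl⟩

lemma dom_fil {G : SimpleGraph V} {S : Set V} {D : Finset V}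
    (hS : Closed G S) (hD : IsDomSet G D) : PartDom G S (fil S D) := by
  refine ⟨fun u hu => (mem_fil.1 hu).2, fun v hv => ?_⟩
  obtain ⟨u, huD, hu⟩ := hD v
  have huS : u ∈ S := by
    rcases hu with rfl | hadj
    · exact hv
    · by_contra hus
      exact (hS.compl hadj hus) hv
  exact ⟨u, mem_fil.2 ⟨huD, huS⟩, hu⟩

lemma union_dom {G : SimpleGraph V} {S : Set V} {D₁ D₂ : Finset V}
    (h₁ : PartDom G S D₁) (h₂ : PartDom G Sᶜ D₂) : IsDomSet G (unn D₁ D₂) := by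
  intro v
  by_cases hv : v ∈ S
  · obtain ⟨u, hu, hh⟩ := h₁.2 v hv
    exact ⟨u, mem_unn.2 (Or.inl hu), hh⟩
  · obtain ⟨u, hu, hh⟩ := h₂.2 v hv
    exact ⟨u, mem_unn.2 (Or.inr hu), hh⟩

lemma card_union_parts {S : Set V} {D₁ D₂ : Finset V}
    (h₁ : ∀ u ∈ D₁, u ∈ S) (h₂ : ∀ u ∈ D₂, u ∈ Sᶜ) :
    (unn D₁ D₂).card = D₁.card + D₂.card :=
  Finset.card_union_of_disjoint
    (Finset.disjoint_left.2 fun a ha ha₂ => (h₂ a ha₂) (h₁ a ha))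

lemma domNum_split {G : SimpleGraph V} [Fintype V] {S : Set V}
    (hS : Closed G S) : domNum G = partNum G S + partNum G Sᶜ := by
  apply le_antisymm
  · obtain ⟨E₁, hE₁, hc₁⟩ := exists_part_min G S
    obtain ⟨E₂, hE₂, hc₂⟩ := exists_part_min G Sᶜ
    calc domNum G ≤ (unn E₁ E₂).card := domNum_le (union_dom hE₁ hE₂)
      _ = E₁.card + E₂.card := card_union_parts hE₁.1 hE₂.1
      _ = _ := by rw [hc₁, hc₂]
  · obtain ⟨D, hD, hc⟩ := exists_gamma G
    have h₁ := partNum_le (dom_fil hS hD)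
    have h₂ := partNum_le (dom_fil hS.compl hD)
    have h₃ := fil_card_add (S := S) D
    omega

lemma gamma_parts {G : SimpleGraph V} [Fintype V] {S : Set V} {D : Finset V}
    (hS : Closed G S) (hD : IsGammaSet G D) :
    (fil S D).card = partNum G S ∧ (fil Sᶜ D).card = partNum G Sᶜ := by
  have h₁ := partNum_le (dom_fil hS hD.1)
  have h₂ := partNum_le (dom_fil hS.compl hD.1)
  have h₃ := fil_card_add (S := S) D
  have h₄ := domNum_split hS
  have h₅ := hD.2
  omega

lemma gamma_of_parts {G : SimpleGraph V} [Fintype V] {S : Set V}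
    {E₁ E₂ : Finset V} (hS : Closed G S) (h₁ : PartDom G S E₁) (hc₁ : E₁.card = partNum G S)
    (h₂ : PartDom G Sᶜ E₂) (hc₂ : E₂.card = partNum G Sᶜ) : IsGammaSet G (unn E₁ E₂) := by
  refine ⟨union_dom h₁ h₂, ?_⟩
  rw [card_union_parts h₁.1 h₂.1, hc₁, hc₂, domNum_split hS]

/-- The lift of `S` to the vertex type of `G - x`. -/
def Slift (x : V) (S : Set V) : Set {u : V // u ≠ x} := {w | ↑w ∈ S}

lemma closed_lift {G : SimpleGraph V} {x : V} {S : Set V} (hS : Closed G S) :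
    Closed (vdel G x) (Slift x S) := fun a b hab ha => hS hab ha

lemma transfer_up {G : SimpleGraph V} {x : V} {S : Set V} (hx : x ∉ S)
    {D' : Finset {u : V // u ≠ x}} (hD : PartDom (vdel G x) (Slift x S) D') :
    PartDom G S (D'.map (Function.Embedding.subtype _)) := by
  constructor
  · intro u hu
    obtain ⟨w, hw, rfl⟩ := Finset.mem_map.1 hu
    exact hD.1 w hw
  · intro v hv
    have hvx : v ≠ x := fun h => hx (h ▸ hv)
    obtain ⟨u', hu', hh⟩ := hD.2 ⟨v, hvx⟩ hv
    refine ⟨↑u', Finset.mem_map_of_mem _ hu', ?_⟩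
    rcases hh with rfl | hadj
    · exact Or.inl rfl
    · exact Or.inr hadj

lemma transfer_down {G : SimpleGraph V} {x : V} {S : Set V} (hx : x ∉ S)
    {D : Finset V} (hD : PartDom G S D) :
    PartDom (vdel G x) (Slift x S) (subt x D) := by
  constructor
  · intro w hw
    exact hD.1 _ (mem_subt.1 hw)
  · intro w hw
    obtain ⟨u, hu, hh⟩ := hD.2 ↑w hw
    have hux : u ≠ x := fun he => hx (he ▸ hD.1 u hu)
    refine ⟨⟨u, hux⟩, mem_subt.2 hu, ?_⟩
    rcases hh with rfl | hadj
    · exact Or.inl (Subtype.ext rfl)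
    · exact Or.inr hadj

lemma partNum_transfer {G : SimpleGraph V} {x : V} {S : Set V} (hx : x ∉ S) :
    partNum (vdel G x) (Slift x S) = partNum G S := by
  unfold partNum
  congr 1
  ext n
  constructor
  · rintro ⟨D', hD', rfl⟩
    exact ⟨_, transfer_up hx hD', (Finset.card_map _)⟩
  · rintro ⟨D, hD, rfl⟩
    exact ⟨_, transfer_down hx hD, subt_card fun u hu he => hx (he ▸ hD.1 u hu)⟩

lemma key_contra {G : SimpleGraph V} [Fintype V] {S : Set V} {x : V}
    (hU : ∃! D : Finset {u : V // u ≠ x}, IsGammaSet (vdel G x) D)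
    (hS : Closed G S) (hx : x ∉ S) {E₁ E₂ : Finset V}
    (h₁ : PartDom G S E₁) (hc₁ : E₁.card = partNum G S)
    (h₂ : PartDom G S E₂) (hc₂ : E₂.card = partNum G S)
    (hne : E₁ ≠ E₂) : False := by
  have hS'c : Closed (vdel G x) (Slift x S) := closed_lift hS
  have hp₁ := transfer_down hx h₁
  have hp₂ := transfer_down hx h₂
  have hx₁ : ∀ u ∈ E₁, u ≠ x := fun u hu he => hx (he ▸ h₁.1 u hu)
  have hx₂ : ∀ u ∈ E₂, u ≠ x := fun u hu he => hx (he ▸ h₂.1 u hu)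
  have hc₁' : (subt x E₁).card = partNum (vdel G x) (Slift x S) := by
    rw [subt_card hx₁, hc₁, partNum_transfer hx]
  have hc₂' : (subt x E₂).card = partNum (vdel G x) (Slift x S) := by
    rw [subt_card hx₂, hc₂, partNum_transfer hx]
  obtain ⟨F, hF, hcF⟩ := exists_part_min (vdel G x) (Slift x S)ᶜ
  have hg₁ := gamma_of_parts hS'c hp₁ hc₁' hF hcF
  have hg₂ := gamma_of_parts hS'c hp₂ hc₂' hF hcF
  obtain ⟨D, -, hDu⟩ := hU
  have heq : unn (subt x E₁) F = unn (subt x E₂) F := by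
    rw [hDu _ hg₁, hDu _ hg₂]
  have key : ∀ E' : Finset {u : V // u ≠ x}, (∀ u ∈ E', u ∈ Slift x S) →
      fil (Slift x S) (unn E' F) = E' := by
    intro E' hE'
    ext a
    simp only [mem_fil, mem_unn]
    constructor
    · rintro ⟨(hh | hh), hSm⟩
      · exact hh
      · exact absurd hSm (hF.1 a hh)
    · intro hh
      exact ⟨Or.inl hh, hE' a hh⟩
  have hsub : subt x E₁ = subt x E₂ := by
    rw [← key _ hp₁.1, ← key _ hp₂.1, heq]
  exact hne (subt_inj hx₁ hx₂ hsub)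

theorem hypoUD_connected [Fintype V] [DecidableEq V] (G : SimpleGraph V)
    (h : HypoUD G) : G.Connected := by
  obtain ⟨⟨D₁, D₂, hg₁, hg₂, hne⟩, hU⟩ := h
  have hV : Nonempty V := by
    by_contra hV
    rw [not_nonempty_iff] at hV
    exact hne (Subsingleton.elim _ _)
  rw [connected_iff]
  refine ⟨?_, hV⟩
  by_contra hpc
  unfold SimpleGraph.Preconnected at hpc
  push_neg at hpc
  obtain ⟨u, v, huv⟩ := hpc
  set S : Set V := {w | G.Reachable u w} with hSdef
  have hS : Closed G S := fun a b hab ha => ha.trans hab.reachable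
  have hu : u ∈ S := Reachable.refl u
  have hv : v ∉ S := huv
  have husc : u ∉ Sᶜ := fun hh => hh hu
  by_cases hcase : fil S D₁ = fil S D₂
  · have h2 : fil Sᶜ D₁ ≠ fil Sᶜ D₂ := by
      intro he
      apply hne
      ext a
      by_cases haS : a ∈ S
      · have := Finset.ext_iff.1 hcase a
        simpa [mem_fil, haS] using this
      · have := Finset.ext_iff.1 he a
        simpa [mem_fil, haS] using this
    exact key_contra (hU u) hS.compl husc (dom_fil hS.compl hg₁.1)
      (gamma_parts hS hg₁).2 (dom_fil hS.compl hg₂.1) (gamma_parts hS hg₂).2 h2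
  · exact key_contra (hU v) hS hv (dom_fil hS hg₁.1)
      (gamma_parts hS hg₁).1 (dom_fil hS hg₂.1) (gamma_parts hS hg₂).1 hcase
end

section
/- If G is a hypo-unique-domination graph of order n ≥ 3, then G has minimum degree δ(G) ≥ 2. -/
open SimpleGraph

variable {V : Type*}

/- ### Auxiliary lemmas -/

lemma subtype_map_eq' [DecidableEq V] {x : V} {T : Finset V} (hx : x ∉ T) :
    (T.subtype (· ≠ x)).map (Function.Embedding.subtype fun u => u ≠ x) = T := by
  rw [Finset.subtype_map]
  exact Finset.filter_true_of_mem fun a ha h => hx (h ▸ ha)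

lemma isDomSet_vdel_iff (G : SimpleGraph V) (x : V) (D : Finset {u : V // u ≠ x}) :
    IsDomSet (vdel G x) D ↔
      ∀ b, b ≠ x → ∃ a ∈ D.map (Function.Embedding.subtype fun u => u ≠ x),
        a = b ∨ G.Adj a b := by
  constructor
  · intro hd b hb
    obtain ⟨a, ha, hc⟩ := hd ⟨b, hb⟩
    refine ⟨a.1, Finset.mem_map_of_mem _ ha, ?_⟩
    rcases hc with hh | hh
    · exact Or.inl (congrArg Subtype.val hh)
    · exact Or.inr hh
  · intro hd b
    obtain ⟨a, ha, hc⟩ := hd b.1 b.2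
    rw [Finset.mem_map] at ha
    obtain ⟨a', ha', haa⟩ := ha
    have haa' : a'.1 = a := by simpa using haa
    refine ⟨a', ha', ?_⟩
    rcases hc with hh | hh
    · exact Or.inl (Subtype.ext (haa'.trans hh))
    · exact Or.inr (show G.Adj a'.1 b.1 from haa'.symm ▸ hh)

lemma domNum_le_s2 (G : SimpleGraph V) {T : Finset V}
    (hdom : ∀ b, ∃ a ∈ T, a = b ∨ G.Adj a b) : domNum G ≤ T.card :=
  Nat.sInf_le ⟨T, hdom, rfl⟩

lemma domNum_vdel_le (G : SimpleGraph V) [DecidableEq V] {x : V} {T : Finset V}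
    (hx : x ∉ T) (hdom : ∀ b, b ≠ x → ∃ a ∈ T, a = b ∨ G.Adj a b) :
    domNum (vdel G x) ≤ T.card := by
  apply Nat.sInf_le
  refine ⟨T.subtype (· ≠ x), ?_, ?_⟩
  · rw [isDomSet_vdel_iff, subtype_map_eq' hx]
    exact hdom
  · calc (T.subtype (· ≠ x)).card
        = ((T.subtype (· ≠ x)).map (Function.Embedding.subtype fun u => u ≠ x)).card :=
          (Finset.card_map _).symm
      _ = T.card := by rw [subtype_map_eq' hx]

/-- Ambient version of a γ-set of `G - x`. -/
def AGS (G : SimpleGraph V) (x : V) (T : Finset V) : Prop :=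
  x ∉ T ∧ (∀ b, b ≠ x → ∃ a ∈ T, a = b ∨ G.Adj a b) ∧ T.card = domNum (vdel G x)

lemma exists_AGS (G : SimpleGraph V) [DecidableEq V]
    (h : ∀ x : V, ∃! D : Finset {u : V // u ≠ x}, IsGammaSet (vdel G x) D) (x : V) :
    ∃ Ex : Finset V, AGS G x Ex ∧ ∀ T, AGS G x T → T = Ex := by
  obtain ⟨D, hD, huniq⟩ := h x
  refine ⟨D.map (Function.Embedding.subtype fun u => u ≠ x), ⟨?_, ?_, ?_⟩, ?_⟩
  · intro hmem
    rw [Finset.mem_map] at hmem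
    obtain ⟨a, _, ha⟩ := hmem
    exact a.2 (by simpa using ha)
  · exact (isDomSet_vdel_iff G x D).mp hD.1
  · rw [Finset.card_map]; exact hD.2
  · intro T hT
    have hsub : IsGammaSet (vdel G x) (T.subtype (· ≠ x)) := by
      constructor
      · rw [isDomSet_vdel_iff, subtype_map_eq' hT.1]
        exact hT.2.1
      · have hc : (T.subtype (· ≠ x)).card = T.card := by
          calc (T.subtype (· ≠ x)).card
              = ((T.subtype (· ≠ x)).map (Function.Embedding.subtype fun u => u ≠ x)).card :=
                (Finset.card_map _).symm
            _ = T.card := by rw [subtype_map_eq' hT.1]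
        rw [hc]; exact hT.2.2
    have heq := huniq _ hsub
    calc T = (T.subtype (· ≠ x)).map (Function.Embedding.subtype fun u => u ≠ x) :=
          (subtype_map_eq' hT.1).symm
      _ = D.map (Function.Embedding.subtype fun u => u ≠ x) := by rw [heq]
theorem hypoUD_minDegree [Fintype V] [DecidableEq V] (G : SimpleGraph V)
    [DecidableRel G.Adj] (h : HypoUD G) (h3 : 3 ≤ Fintype.card V) :
    2 ≤ G.minDegree := by
  classical
  obtain ⟨⟨S₁, S₂, hS₁, hS₂, hne⟩, huniqGS⟩ := h
  obtain ⟨hS₁dom, hS₁card⟩ := hS₁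
  obtain ⟨hS₂dom, hS₂card⟩ := hS₂
  set γ := domNum G with hγdef
  have oracle := exists_AGS G huniqGS
  choose E hEfull using oracle
  have hEnot : ∀ x, x ∉ E x := fun x => (hEfull x).1.1
  have hEdom : ∀ x, ∀ b, b ≠ x → ∃ a ∈ E x, a = b ∨ G.Adj a b := fun x => (hEfull x).1.2.1
  have hEcard : ∀ x, (E x).card = domNum (vdel G x) := fun x => (hEfull x).1.2.2
  have hEuniq : ∀ x, ∀ T, AGS G x T → T = E x := fun x => (hEfull x).2
  have hNE : Nonempty V := Fintype.card_pos_iff.mp (by omega)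
  by_contra hcon
  push_neg at hcon
  obtain ⟨v, hvdeg⟩ := G.exists_minimal_degree_vertex
  have hdeg : (G.neighborFinset v).card ≤ 1 := by
    have hd : G.degree v ≤ 1 := by omega
    exact hd
  by_cases hex : ∃ z, G.Adj z v
  · -- v has a (unique) neighbour u
    obtain ⟨u, huv⟩ := hex
    have hvu : G.Adj v u := huv.symm
    have hune : u ≠ v := huv.ne
    have huniqu : ∀ z, G.Adj z v → z = u := by
      intro z hz
      have h1 : z ∈ G.neighborFinset v := (G.mem_neighborFinset v z).mpr hz.symm
      have h2 : u ∈ G.neighborFinset v := (G.mem_neighborFinset v u).mpr hvu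
      exact Finset.card_le_one.mp hdeg z h1 u h2
    have hγpos : 1 ≤ γ := by
      obtain ⟨a, ha, _⟩ := hS₁dom v
      have := Finset.card_pos.mpr ⟨a, ha⟩
      omega
    have hLdrop : ∀ T : Finset V, u ∈ T → ∀ b, (∃ a ∈ T, a = b ∨ G.Adj a b) →
        ∃ a ∈ T.erase v, a = b ∨ G.Adj a b := by
      intro T huT b hb
      obtain ⟨a, ha, hc⟩ := hb
      by_cases hav : a = v
      · subst hav
        rcases hc with rfl | hh
        · exact ⟨u, Finset.mem_erase.mpr ⟨hune, huT⟩, Or.inr huv⟩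
        · exact ⟨u, Finset.mem_erase.mpr ⟨hune, huT⟩, Or.inl (huniqu b hh.symm).symm⟩
      · exact ⟨a, Finset.mem_erase.mpr ⟨hav, ha⟩, hc⟩
    have hF1 : ∀ S : Finset V, (∀ b, ∃ a ∈ S, a = b ∨ G.Adj a b) → S.card = γ →
        u ∈ S → v ∈ S → False := by
      intro S hdom hcard huS hvS
      have hdom' : ∀ b, ∃ a ∈ S.erase v, a = b ∨ G.Adj a b := fun b => hLdrop S huS b (hdom b)
      have h1 := domNum_le_s2 G hdom'
      rw [Finset.card_erase_of_mem hvS, hcard] at h1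
      omega
    have hF3 : ∀ x, x ≠ u → x ≠ v → u ∈ E x ∧ v ∉ E x := by
      intro x hxu hxv
      obtain ⟨a, ha, hc⟩ := hEdom x v hxv.symm
      have haOr : a = v ∨ a = u := by
        rcases hc with hh | hh
        · exact Or.inl hh
        · exact Or.inr (huniqu a hh)
      have hnotboth : ¬(u ∈ E x ∧ v ∈ E x) := by
        rintro ⟨hu', hv'⟩
        have hdom' : ∀ b, b ≠ x → ∃ a ∈ (E x).erase v, a = b ∨ G.Adj a b :=
          fun b hb => hLdrop _ hu' b (hEdom x b hb)
        have hnm : x ∉ (E x).erase v := fun hh => hEnot x (Finset.mem_of_mem_erase hh)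
        have hle := domNum_vdel_le G hnm hdom'
        rw [Finset.card_erase_of_mem hv'] at hle
        have h5 := hEcard x
        have h6 : 1 ≤ (E x).card := Finset.card_pos.mpr ⟨v, hv'⟩
        omega
      have huEx : u ∈ E x := by
        rcases haOr with rfl | rfl
        · by_contra huEx
          have hdomT : ∀ b, b ≠ x → ∃ a' ∈ insert u ((E x).erase a), a' = b ∨ G.Adj a' b := by
            intro b hb
            obtain ⟨c, hc1, hc2⟩ := hEdom x b hb
            by_cases hcv : c = a
            · subst hcv
              rcases hc2 with rfl | hadj
              · exact ⟨u, Finset.mem_insert_self _ _, Or.inr huv⟩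
              · exact ⟨u, Finset.mem_insert_self _ _, Or.inl (huniqu b hadj.symm).symm⟩
            · exact ⟨c, Finset.mem_insert_of_mem (Finset.mem_erase.mpr ⟨hcv, hc1⟩), hc2⟩
          have hTx : x ∉ insert u ((E x).erase a) := by
            intro hx
            rcases Finset.mem_insert.mp hx with hh | hh
            · exact hxu hh
            · exact hEnot x (Finset.mem_of_mem_erase hh)
          have hcardT : (insert u ((E x).erase a)).card = domNum (vdel G x) := by
            rw [Finset.card_insert_of_notMem (fun hh => huEx (Finset.mem_of_mem_erase hh)),
              Finset.card_erase_of_mem ha]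
            have h5 := hEcard x
            have h6 : 1 ≤ (E x).card := Finset.card_pos.mpr ⟨a, ha⟩
            omega
          have hTEx : insert u ((E x).erase a) = E x := hEuniq x _ ⟨hTx, hdomT, hcardT⟩
          have hvT : a ∈ insert u ((E x).erase a) := hTEx.symm ▸ ha
          rcases Finset.mem_insert.mp hvT with hh | hh
          · exact hune hh.symm
          · exact (Finset.mem_erase.mp hh).1 rfl
        · exact ha
      exact ⟨huEx, fun hv' => hnotboth ⟨huEx, hv'⟩⟩
    have hF4 : v ∈ E u := by
      obtain ⟨a, ha, hc⟩ := hEdom u v hune.symm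
      rcases hc with rfl | hh
      · exact ha
      · exact absurd ((huniqu a hh) ▸ ha) (hEnot u)
    have hF7 : γ ≤ domNum (vdel G u) := by
      have hdom : ∀ b, ∃ a ∈ insert u ((E u).erase v), a = b ∨ G.Adj a b := by
        intro b
        by_cases hbu : b = u
        · exact ⟨u, Finset.mem_insert_self _ _, Or.inl hbu.symm⟩
        obtain ⟨a, ha, hc⟩ := hEdom u b hbu
        by_cases hav : a = v
        · subst hav
          rcases hc with hh | hh
          · exact ⟨u, Finset.mem_insert_self _ _, Or.inr (hh ▸ huv)⟩
          · exact absurd (huniqu b hh.symm) hbu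
        · exact ⟨a, Finset.mem_insert_of_mem (Finset.mem_erase.mpr ⟨hav, ha⟩), hc⟩
      have h1 := domNum_le_s2 G hdom
      have h2 : u ∉ (E u).erase v := fun hh => hEnot u (Finset.mem_of_mem_erase hh)
      rw [Finset.card_insert_of_notMem h2, Finset.card_erase_of_mem hF4] at h1
      have h3 := hEcard u
      have h4 : 1 ≤ (E u).card := Finset.card_pos.mpr ⟨v, hF4⟩
      omega
    by_cases hw : ∃ w, G.Adj u w ∧ w ≠ v
    · obtain ⟨w₀, hw₀adj, hw₀v⟩ := hw
      -- F6 : any γ-set containing v equals E u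
      have hF6 : ∀ S : Finset V, (∀ b, ∃ a ∈ S, a = b ∨ G.Adj a b) → S.card = γ →
          v ∈ S → S = E u := by
        intro S hdom hcard hvS
        have huS : u ∉ S := fun huS => hF1 S hdom hcard huS hvS
        have hle := domNum_vdel_le G huS (fun b _ => hdom b)
        exact hEuniq u S ⟨huS, fun b _ => hdom b, by omega⟩
      have hkey : ∀ S : Finset V, (∀ b, ∃ a ∈ S, a = b ∨ G.Adj a b) → v ∉ S → u ∈ S := by
        intro S hdom hvS
        obtain ⟨a, ha, hc⟩ := hdom v
        rcases hc with rfl | hh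
        · exact absurd ha hvS
        · exact (huniqu a hh) ▸ ha
      have hF8 : ∃ S : Finset V, (∀ b, ∃ a ∈ S, a = b ∨ G.Adj a b) ∧ S.card = γ ∧
          u ∈ S ∧ v ∉ S := by
        by_cases h1 : v ∈ S₁
        · by_cases h2 : v ∈ S₂
          · exact absurd ((hF6 S₁ hS₁dom hS₁card h1).trans (hF6 S₂ hS₂dom hS₂card h2).symm) hne
          · exact ⟨S₂, hS₂dom, hS₂card, hkey S₂ hS₂dom h2, h2⟩
        · exact ⟨S₁, hS₁dom, hS₁card, hkey S₁ hS₁dom h1, h1⟩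
      obtain ⟨S, hSdom, hScard, hSu, hSv⟩ := hF8
      have hγv_le : domNum (vdel G v) ≤ γ := by
        have := domNum_vdel_le G hSv (fun b _ => hSdom b)
        omega
      have hγ_le : γ ≤ domNum (vdel G v) + 1 := by
        have hdom : ∀ b, ∃ a ∈ insert u (E v), a = b ∨ G.Adj a b := by
          intro b
          by_cases hbv : b = v
          · exact ⟨u, Finset.mem_insert_self _ _, Or.inr (hbv ▸ huv)⟩
          · obtain ⟨a, ha, hc⟩ := hEdom v b hbv
            exact ⟨a, Finset.mem_insert_of_mem ha, hc⟩
        have h1 := domNum_le_s2 G hdom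
        have h2 := Finset.card_insert_le u (E v)
        have h3 := hEcard v
        omega
      by_cases hA : domNum (vdel G v) = γ
      · -- CASE A
        have hγu : domNum (vdel G u) = γ := by
          have hvS12 : v ∈ S₁ ∨ v ∈ S₂ := by
            by_contra hcon2
            push_neg at hcon2
            have e1 : S₁ = E v := hEuniq v _ ⟨hcon2.1, fun b _ => hS₁dom b, by
              rw [hS₁card]; exact hA.symm⟩
            have e2 : S₂ = E v := hEuniq v _ ⟨hcon2.2, fun b _ => hS₂dom b, by
              rw [hS₂card]; exact hA.symm⟩
            exact hne (e1.trans e2.symm)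
          rcases hvS12 with hv1 | hv2
          · have huS : u ∉ S₁ := fun hh => hF1 S₁ hS₁dom hS₁card hh hv1
            have h1 := domNum_vdel_le G huS (fun b _ => hS₁dom b)
            omega
          · have huS : u ∉ S₂ := fun hh => hF1 S₂ hS₂dom hS₂card hh hv2
            have h1 := domNum_vdel_le G huS (fun b _ => hS₂dom b)
            omega
        have hSEv : S = E v := hEuniq v _ ⟨hSv, fun b _ => hSdom b, by
          rw [hScard]; exact hA.symm⟩
        have hTdom : ∀ b, b ≠ v → ∃ a ∈ insert w₀ ((E u).erase v), a = b ∨ G.Adj a b := by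
          intro b hbv
          by_cases hbu : b = u
          · exact ⟨w₀, Finset.mem_insert_self _ _, Or.inr (hbu ▸ hw₀adj.symm)⟩
          by_cases hbw : b = w₀
          · exact ⟨w₀, Finset.mem_insert_self _ _, Or.inl hbw.symm⟩
          obtain ⟨a, ha, hc⟩ := hEdom u b hbu
          have hav : a ≠ v := by
            rintro rfl
            rcases hc with hh | hh
            · exact hbv hh.symm
            · exact hbu (huniqu b hh.symm)
          exact ⟨a, Finset.mem_insert_of_mem (Finset.mem_erase.mpr ⟨hav, ha⟩), hc⟩
        have hTv : v ∉ insert w₀ ((E u).erase v) := by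
          intro hm
          rcases Finset.mem_insert.mp hm with hh | hh
          · exact hw₀v hh.symm
          · exact (Finset.mem_erase.mp hh).1 rfl
        by_cases hw₀Eu : w₀ ∈ E u
        · have hTeq : insert w₀ ((E u).erase v) = (E u).erase v :=
            Finset.insert_eq_self.mpr (Finset.mem_erase.mpr ⟨hw₀v, hw₀Eu⟩)
          have hnm : v ∉ (E u).erase v := fun hh => (Finset.mem_erase.mp hh).1 rfl
          have hle := domNum_vdel_le G hnm (by rw [← hTeq]; exact hTdom)
          rw [Finset.card_erase_of_mem hF4] at hle
          have h8 := hEcard u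
          have h9 : 1 ≤ (E u).card := Finset.card_pos.mpr ⟨v, hF4⟩
          omega
        · have hTcard : (insert w₀ ((E u).erase v)).card = domNum (vdel G v) := by
            rw [Finset.card_insert_of_notMem (fun hh => hw₀Eu (Finset.mem_of_mem_erase hh)),
              Finset.card_erase_of_mem hF4]
            have h8 := hEcard u
            have h9 : 1 ≤ (E u).card := Finset.card_pos.mpr ⟨v, hF4⟩
            omega
          have hTEv : insert w₀ ((E u).erase v) = E v := hEuniq v _ ⟨hTv, hTdom, hTcard⟩
          have huT : u ∈ insert w₀ ((E u).erase v) := by rw [hTEv, ← hSEv]; exact hSu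
          rcases Finset.mem_insert.mp huT with hh | hh
          · exact hw₀adj.ne hh
          · exact hEnot u (Finset.mem_of_mem_erase hh)
      · -- CASE B
        have hB : domNum (vdel G v) + 1 = γ := by omega
        set D := E v with hD
        have hDdom : ∀ b, b ≠ v → ∃ a ∈ D, a = b ∨ G.Adj a b := hEdom v
        have hDcard : D.card + 1 = γ := by rw [hD, hEcard v]; exact hB
        have hDu : u ∉ D := by
          intro huD
          have hdom : ∀ b, ∃ a ∈ D, a = b ∨ G.Adj a b := by
            intro b
            by_cases hb : b = v
            · exact ⟨u, huD, Or.inr (hb ▸ huv)⟩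
            · exact hDdom b hb
          have := domNum_le_s2 G hdom
          omega
        have hA'dom : ∀ b, ∃ a ∈ insert u D, a = b ∨ G.Adj a b := by
          intro b
          by_cases hb : b = v
          · exact ⟨u, Finset.mem_insert_self _ _, Or.inr (hb ▸ huv)⟩
          · obtain ⟨a, ha, hc⟩ := hDdom b hb
            exact ⟨a, Finset.mem_insert_of_mem ha, hc⟩
        have hB'dom : ∀ b, ∃ a ∈ insert v D, a = b ∨ G.Adj a b := by
          intro b
          by_cases hb : b = v
          · exact ⟨v, Finset.mem_insert_self _ _, Or.inl hb.symm⟩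
          · obtain ⟨a, ha, hc⟩ := hDdom b hb
            exact ⟨a, Finset.mem_insert_of_mem ha, hc⟩
        have hvD : v ∉ D := hD ▸ hEnot v
        have hcardA' : (insert u D).card = γ := by
          rw [Finset.card_insert_of_notMem hDu]; omega
        have hcardB' : (insert v D).card = γ := by
          rw [Finset.card_insert_of_notMem hvD]; omega
        have hvinsD : v ∉ insert u D := by
          intro hmem
          rcases Finset.mem_insert.mp hmem with hh | hh
          · exact hune hh.symm
          · exact hvD hh
        have hγu : domNum (vdel G u) = γ := by
          have hnm : u ∉ insert v D := by
            intro hmem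
            rcases Finset.mem_insert.mp hmem with hh | hh
            · exact hune hh
            · exact hDu hh
          have h1 := domNum_vdel_le G hnm (fun b _ => hB'dom b)
          omega
        have hB1 : insert v D = E u := by
          apply hEuniq
          refine ⟨?_, fun b _ => hB'dom b, by rw [hcardB', hγu]⟩
          intro hmem
          rcases Finset.mem_insert.mp hmem with hh | hh
          · exact hune hh
          · exact hDu hh
        have hB2 : ∀ w, G.Adj u w → w ≠ v → w ∈ D := by
          intro w huw hwv
          by_contra hwD
          have hwu : w ≠ u := huw.ne'
          have hwA' : w ∉ insert u D := by
            intro hmem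
            rcases Finset.mem_insert.mp hmem with hh | hh
            · exact hwu hh
            · exact hwD hh
          have hwB' : w ∉ insert v D := by
            intro hmem
            rcases Finset.mem_insert.mp hmem with hh | hh
            · exact hwv hh
            · exact hwD hh
          have hle : domNum (vdel G w) ≤ γ := by
            have := domNum_vdel_le G hwA' (fun b _ => hA'dom b)
            omega
          have hge : γ ≤ domNum (vdel G w) := by
            obtain ⟨huEw, _⟩ := hF3 w hwu hwv
            have hdom : ∀ b, ∃ a ∈ E w, a = b ∨ G.Adj a b := by
              intro b
              by_cases hb : b = w
              · exact ⟨u, huEw, Or.inr (hb ▸ huw)⟩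
              · exact hEdom w b hb
            have h5 := domNum_le_s2 G hdom
            have h6 := hEcard w
            omega
          have h1 : insert u D = E w := hEuniq w _ ⟨hwA', fun b _ => hA'dom b, by omega⟩
          have h2 : insert v D = E w := hEuniq w _ ⟨hwB', fun b _ => hB'dom b, by omega⟩
          have : v ∈ insert u D := by
            rw [h1, ← h2]; exact Finset.mem_insert_self v D
          exact hvinsD this
        have hw₀D : w₀ ∈ D := hB2 w₀ hw₀adj hw₀v
        have hγ2 : 2 ≤ γ := by
          have : 1 ≤ D.card := Finset.card_pos.mpr ⟨w₀, hw₀D⟩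
          omega
        -- B3 : find the private vertex q
        have hT₀v : v ∉ insert u (D.erase w₀) := by
          intro hmem
          rcases Finset.mem_insert.mp hmem with hh | hh
          · exact hune hh.symm
          · exact hvD (Finset.mem_of_mem_erase hh)
        have hT₀card : (insert u (D.erase w₀)).card = domNum (vdel G v) := by
          rw [Finset.card_insert_of_notMem (fun hh => hDu (Finset.mem_of_mem_erase hh)),
            Finset.card_erase_of_mem hw₀D]
          have h1 : 1 ≤ D.card := Finset.card_pos.mpr ⟨w₀, hw₀D⟩
          omega
        have hT₀ : ¬ (∀ b, b ≠ v → ∃ a ∈ insert u (D.erase w₀), a = b ∨ G.Adj a b) := by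
          intro hdom
          have heq : insert u (D.erase w₀) = E v := hEuniq v _ ⟨hT₀v, hdom, hT₀card⟩
          rw [← hD] at heq
          exact hDu (heq ▸ Finset.mem_insert_self u _)
        push_neg at hT₀
        obtain ⟨q, hqv, hqnc⟩ := hT₀
        have hqu : u ≠ q ∧ ¬G.Adj u q := hqnc u (Finset.mem_insert_self _ _)
        have hqDe : ∀ d ∈ D.erase w₀, d ≠ q ∧ ¬G.Adj d q :=
          fun d hd => hqnc d (Finset.mem_insert_of_mem hd)
        obtain ⟨a₀, ha₀D, ha₀c⟩ := hDdom q hqv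
        have ha₀w : a₀ = w₀ := by
          by_contra hne'
          obtain ⟨h1, h2⟩ := hqDe a₀ (Finset.mem_erase.mpr ⟨hne', ha₀D⟩)
          rcases ha₀c with hh | hh
          · exact h1 hh
          · exact h2 hh
        subst ha₀w
        have hqw₀ : q ≠ a₀ := by
          rintro rfl
          exact hqu.2 hw₀adj
        have hadjw₀q : G.Adj a₀ q := by
          rcases ha₀c with hh | hh
          · exact absurd hh (Ne.symm hqw₀)
          · exact hh
        have hqD : q ∉ D := by
          intro hqD'
          exact (hqDe q (Finset.mem_erase.mpr ⟨hqw₀, hqD'⟩)).1 rfl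
        have hquOr : ¬(u = q ∨ G.Adj u q) := by
          rintro (hh | hh)
          · exact hqu.1 hh
          · exact hqu.2 hh
        -- stage 1
        have stage1 : ∀ p, p ≠ v → ¬(u = p ∨ G.Adj u p) → G.Adj a₀ p → p ∉ D →
            (¬∃ a ∈ E p, a = p ∨ G.Adj a p) ∧ a₀ ∉ E p ∧
            (∀ b, ∃ a ∈ insert p (E p), a = b ∨ G.Adj a b) ∧ (insert p (E p)).card = γ := by
          intro p hpv hpu hpw hpD
          have hpu' : p ≠ u := fun hh => hpu (Or.inl hh.symm)
          have hpA : p ∉ insert u D := by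
            intro hm
            rcases Finset.mem_insert.mp hm with hh | hh
            · exact hpu' hh
            · exact hpD hh
          have hpB : p ∉ insert v D := by
            intro hm
            rcases Finset.mem_insert.mp hm with hh | hh
            · exact hpv hh
            · exact hpD hh
          have hγple : domNum (vdel G p) ≤ γ := by
            have := domNum_vdel_le G hpA (fun b _ => hA'dom b)
            omega
          have hγpne : domNum (vdel G p) ≠ γ := by
            intro hEq
            have h1 : insert u D = E p := hEuniq p _ ⟨hpA, fun b _ => hA'dom b, by omega⟩
            have h2 : insert v D = E p := hEuniq p _ ⟨hpB, fun b _ => hB'dom b, by omega⟩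
            have : v ∈ insert u D := by
              rw [h1, ← h2]; exact Finset.mem_insert_self v D
            exact hvinsD this
          have hdomP : ∀ b, ∃ a ∈ insert p (E p), a = b ∨ G.Adj a b := by
            intro b
            by_cases hbp : b = p
            · exact ⟨p, Finset.mem_insert_self _ _, Or.inl hbp.symm⟩
            · obtain ⟨a, ha, hc⟩ := hEdom p b hbp
              exact ⟨a, Finset.mem_insert_of_mem ha, hc⟩
          have hcard0 := hEcard p
          have hγgeb := domNum_le_s2 G hdomP
          rw [Finset.card_insert_of_notMem (hEnot p)] at hγgeb
          have hcardP : (insert p (E p)).card = γ := by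
            rw [Finset.card_insert_of_notMem (hEnot p)]
            omega
          have hnotcov : ¬∃ a ∈ E p, a = p ∨ G.Adj a p := by
            rintro ⟨a, ha, hc⟩
            have hdom' : ∀ b, ∃ a' ∈ E p, a' = b ∨ G.Adj a' b := by
              intro b
              by_cases hbp : b = p
              · subst hbp; exact ⟨a, ha, hc⟩
              · exact hEdom p b hbp
            have := domNum_le_s2 G hdom'
            omega
          exact ⟨hnotcov, fun hh => hnotcov ⟨a₀, hh, Or.inr hpw⟩, hdomP, hcardP⟩
        obtain ⟨hq1, hq2, hq3, hq4⟩ := stage1 q hqv hquOr hadjw₀q hqD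
        have hw₀iq : a₀ ∉ insert q (E q) := by
          intro hmem
          rcases Finset.mem_insert.mp hmem with hh | hh
          · exact hqw₀ hh.symm
          · exact hq2 hh
        have hγw₀ : domNum (vdel G a₀) = γ := by
          have hle : domNum (vdel G a₀) ≤ γ := by
            have := domNum_vdel_le G hw₀iq (fun b _ => hq3 b)
            omega
          have hge : γ ≤ domNum (vdel G a₀) := by
            have hw₀u : a₀ ≠ u := hw₀adj.ne'
            obtain ⟨huEw₀, _⟩ := hF3 a₀ hw₀u hw₀v
            have hdom : ∀ b, ∃ a ∈ E a₀, a = b ∨ G.Adj a b := by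
              intro b
              by_cases hb : b = a₀
              · exact ⟨u, huEw₀, Or.inr (hb ▸ hw₀adj)⟩
              · exact hEdom a₀ b hb
            have h5 := domNum_le_s2 G hdom
            have h6 := hEcard a₀
            omega
          omega
        have stage2 : ∀ p, p ≠ v → ¬(u = p ∨ G.Adj u p) → G.Adj a₀ p → p ∉ D →
            insert p (E p) = E a₀ ∧ ∀ y, G.Adj y p → y = a₀ := by
          intro p h1 h2 h3 h4
          obtain ⟨hnc, hw₀p, hdomP, hcardP⟩ := stage1 p h1 h2 h3 h4
          have hmem : a₀ ∉ insert p (E p) := by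
            intro hm
            rcases Finset.mem_insert.mp hm with hh | hh
            · exact h3.ne hh
            · exact hw₀p hh
          have hEqF : insert p (E p) = E a₀ :=
            hEuniq a₀ _ ⟨hmem, fun b _ => hdomP b, by rw [hcardP, hγw₀]⟩
          refine ⟨hEqF, fun y hyp => ?_⟩
          by_contra hyw₀
          have hyEp : y ∉ E p := fun hh => hnc ⟨y, hh, Or.inr hyp⟩
          have hdomY : ∀ b, ∃ a ∈ insert y (E p), a = b ∨ G.Adj a b := by
            intro b
            by_cases hb : b = p
            · exact ⟨y, Finset.mem_insert_self _ _, Or.inr (hb ▸ hyp)⟩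
            · obtain ⟨a, ha, hc⟩ := hEdom p b hb
              exact ⟨a, Finset.mem_insert_of_mem ha, hc⟩
          have hmemY : a₀ ∉ insert y (E p) := by
            intro hm
            rcases Finset.mem_insert.mp hm with hh | hh
            · exact hyw₀ hh.symm
            · exact hw₀p hh
          have hcardY : (insert y (E p)).card = domNum (vdel G a₀) := by
            rw [Finset.card_insert_of_notMem hyEp]
            have hcc := hcardP
            rw [Finset.card_insert_of_notMem (hEnot p)] at hcc
            omega
          have hYF : insert y (E p) = E a₀ := hEuniq a₀ _ ⟨hmemY, fun b _ => hdomY b, hcardY⟩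
          have hyIn : y ∈ insert p (E p) := by
            rw [hEqF, ← hYF]; exact Finset.mem_insert_self _ _
          rcases Finset.mem_insert.mp hyIn with hh | hh
          · exact hyp.ne hh
          · exact hyEp hh
        have hPrivUniq : ∀ p, p ≠ v → ¬(u = p ∨ G.Adj u p) → G.Adj a₀ p → p ∉ D → p = q := by
          intro p h1 h2 h3 h4
          by_contra hpq
          obtain ⟨hFp, hleafp⟩ := stage2 p h1 h2 h3 h4
          obtain ⟨hFq, hleafq⟩ := stage2 q hqv hquOr hadjw₀q hqD
          have hqF : q ∈ E a₀ := by rw [← hFq]; exact Finset.mem_insert_self _ _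
          have hpF : p ∈ E a₀ := by rw [← hFp]; exact Finset.mem_insert_self _ _
          have hWdom : ∀ b, ∃ a ∈ insert a₀ (((E a₀).erase q).erase p), a = b ∨ G.Adj a b := by
            intro b
            by_cases hbw : b = a₀
            · exact ⟨a₀, Finset.mem_insert_self _ _, Or.inl hbw.symm⟩
            by_cases hbq : b = q
            · exact ⟨a₀, Finset.mem_insert_self _ _, Or.inr (hbq ▸ hadjw₀q)⟩
            by_cases hbp : b = p
            · exact ⟨a₀, Finset.mem_insert_self _ _, Or.inr (hbp ▸ h3)⟩
            obtain ⟨a, ha, hc⟩ := hEdom a₀ b hbw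
            have haq : a ≠ q := by
              rintro rfl
              rcases hc with hh | hh
              · exact hbq hh.symm
              · exact hbw (hleafq b hh.symm)
            have hap : a ≠ p := by
              rintro rfl
              rcases hc with hh | hh
              · exact hbp hh.symm
              · exact hbw (hleafp b hh.symm)
            exact ⟨a, Finset.mem_insert_of_mem
              (Finset.mem_erase.mpr ⟨hap, Finset.mem_erase.mpr ⟨haq, ha⟩⟩), hc⟩
          have hpq' : p ∈ (E a₀).erase q := Finset.mem_erase.mpr ⟨hpq, hpF⟩
          have hw₀W : a₀ ∉ ((E a₀).erase q).erase p :=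
            fun hh => hEnot a₀ (Finset.mem_of_mem_erase (Finset.mem_of_mem_erase hh))
          have hcard := domNum_le_s2 G hWdom
          rw [Finset.card_insert_of_notMem hw₀W, Finset.card_erase_of_mem hpq',
            Finset.card_erase_of_mem hqF] at hcard
          have h7 := hEcard a₀
          omega
        by_cases hbr : ∃ w₁, G.Adj u w₁ ∧ w₁ ≠ v ∧ w₁ ≠ a₀
        · obtain ⟨w₁, hw₁adj, hw₁v, hw₁w₀⟩ := hbr
          have hw₁D : w₁ ∈ D := hB2 w₁ hw₁adj hw₁v
          have hw₁e : w₁ ∈ D.erase a₀ := Finset.mem_erase.mpr ⟨hw₁w₀, hw₁D⟩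
          have hTv : v ∉ insert q (D.erase a₀) := by
            intro hm
            rcases Finset.mem_insert.mp hm with hh | hh
            · exact hqv hh.symm
            · exact hvD (Finset.mem_of_mem_erase hh)
          have hTdom : ∀ b, b ≠ v → ∃ a ∈ insert q (D.erase a₀), a = b ∨ G.Adj a b := by
            intro b hbv
            by_cases hbq : b = q
            · exact ⟨q, Finset.mem_insert_self _ _, Or.inl hbq.symm⟩
            by_cases hbw : b = a₀
            · exact ⟨q, Finset.mem_insert_self _ _, Or.inr (hbw ▸ hadjw₀q.symm)⟩
            by_cases hbu : b = u
            · exact ⟨w₁, Finset.mem_insert_of_mem hw₁e, Or.inr (hbu ▸ hw₁adj.symm)⟩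
            by_cases hcov : ∃ a ∈ D.erase a₀, a = b ∨ G.Adj a b
            · obtain ⟨a, ha, hc⟩ := hcov
              exact ⟨a, Finset.mem_insert_of_mem ha, hc⟩
            exfalso
            have hadj : G.Adj a₀ b := by
              obtain ⟨a, ha, hc⟩ := hDdom b hbv
              have haw : a = a₀ := by
                by_contra hne'
                exact hcov ⟨a, Finset.mem_erase.mpr ⟨hne', ha⟩, hc⟩
              subst haw
              rcases hc with hh | hh
              · exact absurd hh.symm hbw
              · exact hh
            have hnu : ¬(u = b ∨ G.Adj u b) := by
              rintro (hh | hh)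
              · exact hbu hh.symm
              · have hbD : b ∈ D := hB2 b hh hbv
                exact hcov ⟨b, Finset.mem_erase.mpr ⟨hbw, hbD⟩, Or.inl rfl⟩
            have hbD : b ∉ D := fun hh => hcov ⟨b, Finset.mem_erase.mpr ⟨hbw, hh⟩, Or.inl rfl⟩
            exact hbq (hPrivUniq b hbv hnu hadj hbD)
          have hTcard : (insert q (D.erase a₀)).card = domNum (vdel G v) := by
            rw [Finset.card_insert_of_notMem (fun hh => hqD (Finset.mem_of_mem_erase hh)),
              Finset.card_erase_of_mem hw₀D]
            have h1 : 1 ≤ D.card := Finset.card_pos.mpr ⟨a₀, hw₀D⟩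
            omega
          have heq : insert q (D.erase a₀) = E v := hEuniq v _ ⟨hTv, hTdom, hTcard⟩
          rw [← hD] at heq
          exact hqD (heq ▸ Finset.mem_insert_self q _)
        · push_neg at hbr
          have hT'u : u ∉ insert q (insert v (D.erase a₀)) := by
            intro hm
            rcases Finset.mem_insert.mp hm with hh | hm2
            · exact hqu.1 hh
            rcases Finset.mem_insert.mp hm2 with hh | hh
            · exact hune hh
            · exact hDu (Finset.mem_of_mem_erase hh)
          have hT'dom : ∀ b, b ≠ u → ∃ a ∈ insert q (insert v (D.erase a₀)),
              a = b ∨ G.Adj a b := by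
            intro b hbu
            by_cases hbq : b = q
            · exact ⟨q, Finset.mem_insert_self _ _, Or.inl hbq.symm⟩
            by_cases hbv : b = v
            · exact ⟨v, Finset.mem_insert_of_mem (Finset.mem_insert_self _ _), Or.inl hbv.symm⟩
            by_cases hbw : b = a₀
            · exact ⟨q, Finset.mem_insert_self _ _, Or.inr (hbw ▸ hadjw₀q.symm)⟩
            by_cases hcov : ∃ a ∈ D.erase a₀, a = b ∨ G.Adj a b
            · obtain ⟨a, ha, hc⟩ := hcov
              exact ⟨a, Finset.mem_insert_of_mem (Finset.mem_insert_of_mem ha), hc⟩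
            exfalso
            have hadj : G.Adj a₀ b := by
              obtain ⟨a, ha, hc⟩ := hDdom b hbv
              have haw : a = a₀ := by
                by_contra hne'
                exact hcov ⟨a, Finset.mem_erase.mpr ⟨hne', ha⟩, hc⟩
              subst haw
              rcases hc with hh | hh
              · exact absurd hh.symm hbw
              · exact hh
            have hnu : ¬(u = b ∨ G.Adj u b) := by
              rintro (hh | hh)
              · exact hbu hh.symm
              · exact hbw (hbr b hh hbv)
            have hbD : b ∉ D := fun hh => hcov ⟨b, Finset.mem_erase.mpr ⟨hbw, hh⟩, Or.inl rfl⟩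
            exact hbq (hPrivUniq b hbv hnu hadj hbD)
          have hT'card : (insert q (insert v (D.erase a₀))).card = domNum (vdel G u) := by
            have hv' : v ∉ D.erase a₀ := fun hh => hvD (Finset.mem_of_mem_erase hh)
            have hq' : q ∉ insert v (D.erase a₀) := by
              intro hm
              rcases Finset.mem_insert.mp hm with hh | hh
              · exact hqv hh
              · exact hqD (Finset.mem_of_mem_erase hh)
            rw [Finset.card_insert_of_notMem hq', Finset.card_insert_of_notMem hv',
              Finset.card_erase_of_mem hw₀D]
            have h1 : 1 ≤ D.card := Finset.card_pos.mpr ⟨a₀, hw₀D⟩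
            omega
          have hfin : insert q (insert v (D.erase a₀)) = E u :=
            hEuniq u _ ⟨hT'u, hT'dom, hT'card⟩
          rw [← hB1] at hfin
          have hqmem : q ∈ insert v D := by
            rw [← hfin]; exact Finset.mem_insert_self _ _
          rcases Finset.mem_insert.mp hqmem with hh | hh
          · exact hqv hh
          · exact hqD hh
    · -- u has no other neighbour : K₂ component
      push_neg at hw
      obtain ⟨x, hxu, hxv⟩ : ∃ x, x ≠ u ∧ x ≠ v := by
        by_contra hcon2
        push_neg at hcon2
        have hsub : (Finset.univ : Finset V) ⊆ {u, v} := by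
          intro y _
          rcases eq_or_ne y u with rfl | hyu
          · exact Finset.mem_insert_self _ _
          · rw [hcon2 y hyu]
            exact Finset.mem_insert_of_mem (Finset.mem_singleton_self v)
        have h5 := Finset.card_le_card hsub
        have h6 : ({u, v} : Finset V).card ≤ 2 :=
          (Finset.card_insert_le u {v}).trans (by simp)
        rw [Finset.card_univ] at h5
        omega
      obtain ⟨huEx, hvEx⟩ := hF3 x hxu hxv
      have hTdom : ∀ b, b ≠ x → ∃ a ∈ insert v ((E x).erase u), a = b ∨ G.Adj a b := by
        intro b hbx
        obtain ⟨a, ha, hc⟩ := hEdom x b hbx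
        by_cases hau : a = u
        · subst hau
          rcases hc with hh | hh
          · exact ⟨v, Finset.mem_insert_self _ _, Or.inr (hh ▸ hvu)⟩
          · have hbv : b = v := hw b hh
            exact ⟨v, Finset.mem_insert_self _ _, Or.inl hbv.symm⟩
        · exact ⟨a, Finset.mem_insert_of_mem (Finset.mem_erase.mpr ⟨hau, ha⟩), hc⟩
      have hTx : x ∉ insert v ((E x).erase u) := by
        intro hm
        rcases Finset.mem_insert.mp hm with hh | hh
        · exact hxv hh
        · exact hEnot x (Finset.mem_of_mem_erase hh)
      have hTcard : (insert v ((E x).erase u)).card = domNum (vdel G x) := by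
        have hvnm : v ∉ (E x).erase u := fun hh => hvEx (Finset.mem_of_mem_erase hh)
        rw [Finset.card_insert_of_notMem hvnm, Finset.card_erase_of_mem huEx]
        have h5 := hEcard x
        have h6 : 1 ≤ (E x).card := Finset.card_pos.mpr ⟨u, huEx⟩
        omega
      have hTeq : insert v ((E x).erase u) = E x := hEuniq x _ ⟨hTx, hTdom, hTcard⟩
      have huT : u ∈ insert v ((E x).erase u) := by rw [hTeq]; exact huEx
      rcases Finset.mem_insert.mp huT with hh | hh
      · exact hune hh
      · exact (Finset.mem_erase.mp hh).1 rfl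
  · -- v is isolated
    push_neg at hex
    have hv1 : v ∈ S₁ := by
      obtain ⟨a, ha, hc⟩ := hS₁dom v
      rcases hc with rfl | hh
      · exact ha
      · exact absurd hh (hex a)
    have hv2 : v ∈ S₂ := by
      obtain ⟨a, ha, hc⟩ := hS₂dom v
      rcases hc with rfl | hh
      · exact ha
      · exact absurd hh (hex a)
    have herase : ∀ S : Finset V, (∀ b, ∃ a ∈ S, a = b ∨ G.Adj a b) →
        ∀ b, b ≠ v → ∃ a ∈ S.erase v, a = b ∨ G.Adj a b := by
      intro S hdom b hb
      obtain ⟨a, ha, hc⟩ := hdom b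
      have hav : a ≠ v := by
        rintro rfl
        rcases hc with hh | hh
        · exact hb hh.symm
        · exact hex b hh.symm
      exact ⟨a, Finset.mem_erase.mpr ⟨hav, ha⟩, hc⟩
    have hγpos : 1 ≤ γ := by
      have := Finset.card_pos.mpr ⟨v, hv1⟩
      omega
    have hγv_le : domNum (vdel G v) + 1 ≤ γ := by
      have h1 := domNum_vdel_le G (Finset.notMem_erase v S₁) (herase S₁ hS₁dom)
      rw [Finset.card_erase_of_mem hv1] at h1
      omega
    have hγ_le : γ ≤ domNum (vdel G v) + 1 := by
      have hdom : ∀ b, ∃ a ∈ insert v (E v), a = b ∨ G.Adj a b := by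
        intro b
        by_cases hbv : b = v
        · exact ⟨v, Finset.mem_insert_self _ _, Or.inl hbv.symm⟩
        · obtain ⟨a, ha, hc⟩ := hEdom v b hbv
          exact ⟨a, Finset.mem_insert_of_mem ha, hc⟩
      have h1 := domNum_le_s2 G hdom
      have h2 := Finset.card_insert_le v (E v)
      have h3 := hEcard v
      omega
    have e1 : S₁.erase v = E v := hEuniq v _ ⟨Finset.notMem_erase v S₁, herase S₁ hS₁dom, by
      rw [Finset.card_erase_of_mem hv1]; omega⟩
    have e2 : S₂.erase v = E v := hEuniq v _ ⟨Finset.notMem_erase v S₂, herase S₂ hS₂dom, by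
      rw [Finset.card_erase_of_mem hv2]; omega⟩
    apply hne
    rw [← Finset.insert_erase hv1, ← Finset.insert_erase hv2, e1, e2]
end

section
/- A cycle C_n (n ≥ 3) is a hypo-unique-domination graph if and only if n ≡ 1 (mod 3). -/
open SimpleGraph

variable {V : Type*}

/-!
Deleting a vertex of the cycle `C_n` leaves the path `P_{n-1}`, and both graphs have maximum
degree `2`. Closed neighbourhoods then have at most three vertices, so every dominating set of a
graph on `N` vertices has at least `⌈N/3⌉` vertices, and one with exactly `N/3` vertices
dominates every vertex exactly once by full closed neighbourhoods. In `P_{3k}` this pins the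
dominating set down to `{1, 4, …, 3k-2}`, so `P_m` has a unique γ-set when `3 ∣ m`. When `3 ∤ m`,
both `{0, 3, 6, …}` and `{1, 4, 7, …}` (plus the last vertex if it is otherwise undominated) are
γ-sets of `P_m` and also of `C_m`, as `γ(C_m) = γ(P_m) = ⌈m/3⌉`. Hence `C_n` has two γ-sets when
`3 ∤ n`, and every `C_n - x` has a unique one exactly when `3 ∣ n - 1`.
-/

open Finset

section Domination

variable {G : SimpleGraph V} {D : Finset V}

lemma IsDomSet.mono {G' : SimpleGraph V} (hD : IsDomSet G D) (h : G ≤ G') : IsDomSet G' D :=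
  fun v => (hD v).imp fun _ ⟨hu, hadj⟩ => ⟨hu, hadj.imp_right (@h _ _)⟩

lemma IsDomSet.one_le_card_dominators [DecidableEq V] [DecidableRel G.Adj] (hD : IsDomSet G D)
    (v : V) : 1 ≤ #{u ∈ D | u = v ∨ G.Adj u v} := by
  obtain ⟨u, hu, huv⟩ := hD v
  exact card_pos.2 ⟨u, mem_filter.2 ⟨hu, huv⟩⟩

lemma IsGammaSet.card_eq {D' : Finset V} (hD : IsGammaSet G D) (hD' : IsGammaSet G D') :
    #D = #D' :=
  hD.2.trans hD'.2.symm

lemma isGammaSet_of_forall_card_le (hD : IsDomSet G D)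
    (h : ∀ D' : Finset V, IsDomSet G D' → #D ≤ #D') : IsGammaSet G D := by
  refine ⟨hD, le_antisymm ?_ (Nat.sInf_le ⟨D, hD, rfl⟩)⟩
  obtain ⟨D', hD', hcard⟩ : domNum G ∈ {n | ∃ D : Finset V, IsDomSet G D ∧ #D = n} :=
    Nat.sInf_mem ⟨_, D, hD, rfl⟩
  exact hcard ▸ h D' hD'

end Domination

section Isomorphism

variable {W : Type*} {G : SimpleGraph V} {H : SimpleGraph W}

lemma isDomSet_map_iff (e : G ≃g H) {D : Finset V} :
    IsDomSet H (D.map e.toEquiv.toEmbedding) ↔ IsDomSet G D := by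
  simp only [IsDomSet, mem_map, e.surjective.forall]
  simp [SimpleGraph.Iso.map_adj_iff]

lemma domNum_congr (e : G ≃g H) : domNum G = domNum H := by
  unfold domNum
  congr! 1
  ext n
  refine e.toEquiv.finsetCongr.exists_congr fun D => ?_
  rw [Equiv.finsetCongr_apply, isDomSet_map_iff, card_map]

lemma existsUnique_isGammaSet_congr (e : G ≃g H) :
    (∃! D, IsGammaSet G D) ↔ ∃! D, IsGammaSet H D :=
  e.toEquiv.finsetCongr.existsUnique_congr fun D => by
    rw [IsGammaSet, IsGammaSet, Equiv.finsetCongr_apply, isDomSet_map_iff, card_map, domNum_congr e]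

def vdelCongr (e : G ≃g H) {x : V} {y : W} (h : e x = y) : vdel G x ≃g vdel H y where
  toEquiv := e.toEquiv.subtypeEquiv fun u => by simp [← h]
  map_rel_iff' := e.map_adj_iff

end Isomorphism

section Counting

variable {G : SimpleGraph V} [Fintype V] [DecidableRel G.Adj] {D : Finset V} {d : ℕ}

lemma card_closedNeighborhood [DecidableEq V] (u : V) :
    #{v | u = v ∨ G.Adj u v} = G.degree u + 1 := by
  have : ({v | u = v ∨ G.Adj u v} : Finset V) = insert u (G.neighborFinset u) := by
    ext v; simp [eq_comm]
  rw [this, card_insert_of_notMem (G.notMem_neighborFinset_self u), card_neighborFinset_eq_degree]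

lemma sum_card_dominators [DecidableEq V] (D : Finset V) :
    ∑ v, #{u ∈ D | u = v ∨ G.Adj u v} = ∑ u ∈ D, (G.degree u + 1) :=
  (sum_card_bipartiteAbove_eq_sum_card_bipartiteBelow (s := D) (t := univ)
    fun u v => u = v ∨ G.Adj u v).symm.trans (sum_congr rfl fun u _ => card_closedNeighborhood u)

lemma IsDomSet.card_le_mul_card (hdeg : ∀ v, G.degree v ≤ d) (hD : IsDomSet G D) :
    Fintype.card V ≤ (d + 1) * #D := by
  classical
  calc Fintype.card V = ∑ _v : V, 1 := by simp
    _ ≤ ∑ v, #{u ∈ D | u = v ∨ G.Adj u v} := sum_le_sum fun v _ => hD.one_le_card_dominators v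
    _ = ∑ u ∈ D, (G.degree u + 1) := sum_card_dominators D
    _ ≤ ∑ _u ∈ D, (d + 1) := sum_le_sum fun u _ => Nat.succ_le_succ (hdeg u)
    _ = (d + 1) * #D := by rw [sum_const, smul_eq_mul, mul_comm]

lemma IsDomSet.isEDS_of_mul_card_le (hdeg : ∀ v, G.degree v ≤ d) (hD : IsDomSet G D)
    (hcard : (d + 1) * #D ≤ Fintype.card V) : IsEDS G D ∧ ∀ u ∈ D, G.degree u = d := by
  classical
  -- the chain of inequalities proving `card_le_mul_card` collapses, so each is termwise tight
  have hdom : ∀ v ∈ univ, 1 ≤ #{u ∈ D | u = v ∨ G.Adj u v} :=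
    fun v _ => hD.one_le_card_dominators v
  have hdeg' : ∀ u ∈ D, G.degree u + 1 ≤ d + 1 := fun u _ => Nat.succ_le_succ (hdeg u)
  have h₁ := sum_le_sum hdom
  have h₂ := sum_le_sum hdeg'
  have hsum := sum_card_dominators (G := G) D
  simp only [sum_const, card_univ, smul_eq_mul, mul_one] at h₁ h₂
  rw [mul_comm] at hcard
  refine ⟨fun v => ?_, fun u hu => ?_⟩
  · have hv := (sum_eq_sum_iff_of_le hdom).1 (by
      simp only [sum_const, card_univ, smul_eq_mul, mul_one]; omega) v (mem_univ v)
    rw [Fintype.existsUnique_iff_card_one, ← filter_filter, filter_univ_mem]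
    exact hv.symm
  · have := (sum_eq_sum_iff_of_le hdeg').1 (by simp only [sum_const, smul_eq_mul]; omega) u hu
    omega

lemma IsDomSet.isGammaSet_of_card_le (hdeg : ∀ v, G.degree v ≤ d) (hD : IsDomSet G D)
    (hcard : #D ≤ (Fintype.card V + d) / (d + 1)) : IsGammaSet G D := by
  refine isGammaSet_of_forall_card_le hD fun D' hD' => hcard.trans ?_
  have := hD'.card_le_mul_card hdeg
  rw [← Nat.lt_succ_iff, Nat.div_lt_iff_lt_mul d.succ_pos]
  nlinarith

end Counting

instance {n : ℕ} : DecidableRel (pathGraph n).Adj := fun _ _ => decidable_of_iff' _ pathGraph_adj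

lemma cycleGraph_degree_le_two {n : ℕ} (v : Fin n) : (cycleGraph n).degree v ≤ 2 := by
  match n with
  | 0 => exact v.elim0
  | 1 => simp [cycleGraph_one_eq_bot]
  | n + 2 => exact cycleGraph_degree_two_le.trans_le card_le_two

lemma pathGraph_degree_le_two {n : ℕ} (v : Fin n) : (pathGraph n).degree v ≤ 2 :=
  (degree_le_of_le pathGraph_le_cycleGraph).trans (cycleGraph_degree_le_two v)

section Path

variable {n : ℕ}

lemma pathGraph_dominates_iff {u v : Fin n} :
    u = v ∨ (pathGraph n).Adj u v ↔ u.val = v.val ∨ u.val + 1 = v.val ∨ v.val + 1 = u.val := by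
  rw [Fin.ext_iff, pathGraph_adj]

lemma pathGraph_degree_le_one_of_val_eq_zero {v : Fin n} (hv : v.val = 0) :
    (pathGraph n).degree v ≤ 1 := by
  rw [← card_neighborFinset_eq_degree, card_le_one]
  intro a ha b hb
  rw [mem_neighborFinset, pathGraph_adj] at ha hb
  exact Fin.ext (by omega)

lemma card_le_of_injOn_div_three {s : Finset (Fin n)}
    (h : Set.InjOn (fun v : Fin n => v.val / 3) s) : #s ≤ (n + 2) / 3 := by
  simpa using card_le_card_of_injOn (t := range ((n + 2) / 3)) _
    (fun v _ => mem_range.2 (by omega)) h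

def pathDomSetOne (n : ℕ) : Finset (Fin n) :=
  {v | v.val % 3 = 1 ∨ v.val % 3 = 0 ∧ v.val + 1 = n}

def pathDomSetZero (n : ℕ) : Finset (Fin n) :=
  {v | v.val % 3 = 0}

@[simp]
lemma mem_pathDomSetOne {v : Fin n} :
    v ∈ pathDomSetOne n ↔ v.val % 3 = 1 ∨ v.val % 3 = 0 ∧ v.val + 1 = n := by
  simp [pathDomSetOne]

@[simp]
lemma mem_pathDomSetZero {v : Fin n} : v ∈ pathDomSetZero n ↔ v.val % 3 = 0 := by
  simp [pathDomSetZero]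

lemma isDomSet_pathDomSetOne : IsDomSet (pathGraph n) (pathDomSetOne n) := by
  intro v
  refine ⟨⟨min (3 * (v / 3) + 1) (n - 1), by omega⟩, by simp only [mem_pathDomSetOne]; omega, ?_⟩
  simp only [pathGraph_dominates_iff]
  omega

lemma isDomSet_pathDomSetZero (h : n % 3 ≠ 0) : IsDomSet (pathGraph n) (pathDomSetZero n) := by
  intro v
  refine ⟨⟨3 * ((v + 1) / 3), by omega⟩, by simp only [mem_pathDomSetZero]; omega, ?_⟩
  simp only [pathGraph_dominates_iff]
  omega

lemma card_pathDomSetOne_le : #(pathDomSetOne n) ≤ (n + 2) / 3 :=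
  card_le_of_injOn_div_three fun u hu v hv huv => by
    simp only [mem_coe, mem_pathDomSetOne] at hu hv huv
    exact Fin.ext (by omega)

lemma card_pathDomSetZero_le : #(pathDomSetZero n) ≤ (n + 2) / 3 :=
  card_le_of_injOn_div_three fun u hu v hv huv => by
    simp only [mem_coe, mem_pathDomSetZero] at hu hv huv
    exact Fin.ext (by omega)

lemma isGammaSet_pathDomSetOne : IsGammaSet (pathGraph n) (pathDomSetOne n) :=
  isDomSet_pathDomSetOne.isGammaSet_of_card_le pathGraph_degree_le_two
    (by simpa using card_pathDomSetOne_le)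

lemma isGammaSet_pathDomSetZero (h : n % 3 ≠ 0) : IsGammaSet (pathGraph n) (pathDomSetZero n) :=
  (isDomSet_pathDomSetZero h).isGammaSet_of_card_le pathGraph_degree_le_two
    (by simpa using card_pathDomSetZero_le)

lemma pathDomSetZero_ne_pathDomSetOne (hn : 2 ≤ n) : pathDomSetZero n ≠ pathDomSetOne n := by
  intro h
  have h0 : (⟨0, by omega⟩ : Fin n) ∈ pathDomSetZero n := mem_pathDomSetZero.2 rfl
  rw [h] at h0
  simp only [mem_pathDomSetOne] at h0
  omega

lemma not_existsUnique_isGammaSet_pathGraph (h : n % 3 ≠ 0) (hn : 2 ≤ n) :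
    ¬ ∃! D, IsGammaSet (pathGraph n) D := fun hu =>
  pathDomSetZero_ne_pathDomSetOne hn
    (hu.unique (isGammaSet_pathDomSetZero h) isGammaSet_pathDomSetOne)

lemma IsEDS.mem_of_mod_three_eq_one {D : Finset (Fin n)} (hE : IsEDS (pathGraph n) D)
    (h0 : ∀ u ∈ D, u.val ≠ 0) (v : Fin n) (hv : v.val % 3 = 1) : v ∈ D := by
  obtain ⟨v, hvn⟩ := v
  obtain ⟨j, rfl⟩ : ∃ j, v = 3 * j + 1 := ⟨v / 3, by dsimp only at hv; omega⟩
  clear hv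
  induction j with
  | zero =>
    obtain ⟨u, hu, huv⟩ := (hE ⟨0, by omega⟩).exists
    simp only [pathGraph_dominates_iff] at huv
    have := h0 u hu
    rwa [show (⟨3 * 0 + 1, hvn⟩ : Fin n) = u from Fin.ext (by rw [Fin.val_mk]; omega)]
  | succ j ih =>
    obtain ⟨u, hu, huv⟩ := (hE ⟨3 * j + 3, by omega⟩).exists
    simp only [pathGraph_dominates_iff] at huv
    by_cases hu4 : u.val = 3 * j + 4
    · rwa [show (⟨3 * (j + 1) + 1, hvn⟩ : Fin n) = u from Fin.ext (by rw [Fin.val_mk]; omega)]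
    · -- otherwise `u` and the vertex `3j + 1` from the induction hypothesis both dominate `3j + 2`
      have hu₂ : u = ⟨3 * j + 2, by omega⟩ ∨ (pathGraph n).Adj u ⟨3 * j + 2, by omega⟩ := by
        simp only [pathGraph_dominates_iff]; omega
      have hv₂ : (⟨3 * j + 1, by omega⟩ : Fin n) = ⟨3 * j + 2, by omega⟩ ∨
          (pathGraph n).Adj ⟨3 * j + 1, by omega⟩ ⟨3 * j + 2, by omega⟩ :=
        Or.inr (pathGraph_adj.2 (Or.inl rfl))
      have := (hE ⟨3 * j + 2, by omega⟩).unique ⟨hu, hu₂⟩ ⟨ih (by omega), hv₂⟩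
      simp only [Fin.ext_iff] at this
      omega

lemma existsUnique_isGammaSet_pathGraph (h : n % 3 = 0) :
    ∃! D, IsGammaSet (pathGraph n) D := by
  refine ⟨pathDomSetOne n, isGammaSet_pathDomSetOne, fun D hD => ?_⟩
  have hcard : #D ≤ #(pathDomSetOne n) := (hD.card_eq isGammaSet_pathDomSetOne).le
  obtain ⟨hE, hdeg⟩ := hD.1.isEDS_of_mul_card_le pathGraph_degree_le_two (by
    have := card_pathDomSetOne_le (n := n)
    simp only [Fintype.card_fin]
    omega)
  have h0 : ∀ u ∈ D, u.val ≠ 0 := fun u hu hu0 => by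
    have := hdeg u hu
    have := pathGraph_degree_le_one_of_val_eq_zero hu0
    omega
  refine (eq_of_subset_of_card_le (fun v hv => hE.mem_of_mod_three_eq_one h0 v ?_) hcard).symm
  rw [mem_pathDomSetOne] at hv
  omega

end Path

section Cycle

def cycleGraphAddRight {n : ℕ} [NeZero n] (d : Fin n) : cycleGraph n ≃g cycleGraph n where
  toEquiv := Equiv.addRight d
  map_rel_iff' := by simp [cycleGraph_adj']

lemma cycleGraph_adj_castSucc_iff {n : ℕ} {i j : Fin (n + 1)} :
    (cycleGraph (n + 2)).Adj i.castSucc j.castSucc ↔ (pathGraph (n + 1)).Adj i j := by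
  have key (a b : Fin (n + 1)) : (a.castSucc - b.castSucc).val = 1 ↔ a.val = b.val + 1 := by
    have := a.isLt
    rcases le_or_gt b.castSucc a.castSucc with h | h
    · rw [Fin.coe_sub_iff_le.2 h, Fin.val_castSucc, Fin.val_castSucc]
      omega
    · rw [Fin.coe_sub_iff_lt.2 h, Fin.val_castSucc, Fin.val_castSucc]
      rw [Fin.castSucc_lt_castSucc_iff, Fin.lt_def] at h
      omega
  rw [cycleGraph_adj', pathGraph_adj, key, key]
  omega

def pathGraphIsoVdelCycleGraph (n : ℕ) :
    pathGraph (n + 1) ≃g vdel (cycleGraph (n + 2)) (Fin.last (n + 1)) where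
  toEquiv := finSuccAboveEquiv (Fin.last (n + 1))
  map_rel_iff' := by
    intro i j
    simp [vdel, finSuccAboveEquiv_apply, cycleGraph_adj_castSucc_iff]

def vdelCycleGraphIsoPathGraph {n : ℕ} (x : Fin (n + 2)) :
    vdel (cycleGraph (n + 2)) x ≃g pathGraph (n + 1) :=
  (vdelCongr (cycleGraphAddRight (Fin.last (n + 1) - x))
    (by simp [cycleGraphAddRight])).trans
    (pathGraphIsoVdelCycleGraph n).symm

lemma isGammaSet_cycleGraph_of_isGammaSet_pathGraph {n : ℕ} {D : Finset (Fin n)}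
    (hD : IsGammaSet (pathGraph n) D) : IsGammaSet (cycleGraph n) D := by
  refine (hD.1.mono pathGraph_le_cycleGraph).isGammaSet_of_card_le cycleGraph_degree_le_two ?_
  have := hD.card_eq isGammaSet_pathDomSetOne
  have := card_pathDomSetOne_le (n := n)
  simp only [Fintype.card_fin]
  omega

end Cycle

theorem hypoUD_cycle (n : ℕ) (hn : 3 ≤ n) :
    HypoUD (cycleGraph n) ↔ n % 3 = 1 := by
  obtain ⟨m, rfl⟩ : ∃ m, n = m + 2 := ⟨n - 2, by omega⟩
  have hdel (x : Fin (m + 2)) := existsUnique_isGammaSet_congr (vdelCycleGraphIsoPathGraph x)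
  constructor
  · rintro ⟨-, huniq⟩
    by_contra h
    exact not_existsUnique_isGammaSet_pathGraph (by omega) (by omega) ((hdel 0).1 (huniq 0))
  · intro h
    refine ⟨⟨pathDomSetZero _, pathDomSetOne _, ?_, ?_, pathDomSetZero_ne_pathDomSetOne (by omega)⟩,
      fun x => (hdel x).2 (existsUnique_isGammaSet_pathGraph (by omega))⟩
    · exact isGammaSet_cycleGraph_of_isGammaSet_pathGraph (isGammaSet_pathDomSetZero (by omega))
    · exact isGammaSet_cycleGraph_of_isGammaSet_pathGraph isGammaSet_pathDomSetOne
end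

section
/- If G is a hypo-unique-domination graph of order at least 3, then for every vertex x of G, the graph G−x has no γ-critical vertices; that is, γ((G−x)−u) ≥ γ(G−x) for all vertices u of G−x. -/
open SimpleGraph

variable {V : Type*}

/-!
If `u` is `γ`-critical in `G - x` and `M` is a minimum dominating set of `G - x - u`, then `M + u`
is the unique minimum dominating set of `G - x`; a neighbour `z ≠ x` of `u` would give a second
one, `M + z`. So `u` has at most one neighbour in `G`, and it remains to see that a hypo-UD graph
`G` of order at least three has none of degree at most one.

An isolated vertex lies in every dominating set, so two minimum dominating sets of `G` would
give two of `G - u`. For a pendant vertex `u` with support `x`, the swap `u ↦ x` shows that the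
unique minimum dominating set of any `G - w` (`w ≠ u, x`) contains `x` and not `u`. If `x` is
pendant as well, this applied to both ends of the edge is contradictory. Otherwise `x` has a
neighbour `y ≠ u`, and since the minimum dominating set of `G - y` contains `x`, it dominates `G`:
`γ(G) ≤ γ(G - y)`. Hence `G - y` has at most one dominating set of size `γ(G)`, and two
minimum dominating sets of `G` force `γ(G - u) < γ(G)`. Conversely, `γ(G - u) < γ(G)` is
refuted by a neighbour `p ≠ u` of `x` for which `G - p` has two dominating sets of size `γ(G)`,
built from the minimum dominating sets of `G - u` and of `G - w` for a suitable `w`.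
-/

open Finset

/-- `D` is a dominating set of the induced subgraph `G[s]`. -/
def DominatesOn (G : SimpleGraph V) (s D : Finset V) : Prop :=
  D ⊆ s ∧ ∀ v ∈ s, ∃ d ∈ D, d = v ∨ G.Adj d v

noncomputable def domNumOn (G : SimpleGraph V) (s : Finset V) : ℕ :=
  sInf {n | ∃ D : Finset V, DominatesOn G s D ∧ D.card = n}

def HasUniqueMinDomOn (G : SimpleGraph V) (s : Finset V) : Prop :=
  ∀ ⦃D₁ D₂ : Finset V⦄, DominatesOn G s D₁ → DominatesOn G s D₂ →
    D₁.card ≤ domNumOn G s → D₂.card ≤ domNumOn G s → D₁ = D₂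

section Domination

variable {G : SimpleGraph V} {s D : Finset V} {u x z : V}

theorem domNumOn_le_card (hD : DominatesOn G s D) : domNumOn G s ≤ D.card :=
  Nat.sInf_le ⟨D, hD, rfl⟩

theorem exists_dominatesOn_card_eq (G : SimpleGraph V) (s : Finset V) :
    ∃ D, DominatesOn G s D ∧ D.card = domNumOn G s :=
  Nat.sInf_mem (s := {n | ∃ D : Finset V, DominatesOn G s D ∧ D.card = n})
    ⟨s.card, s, ⟨subset_refl s, fun v hv => ⟨v, hv, Or.inl rfl⟩⟩, rfl⟩

variable [DecidableEq V]

theorem DominatesOn.erase (hD : DominatesOn G s D) (hu : u ∉ D) :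
    DominatesOn G (s.erase u) D :=
  ⟨fun _ hd => mem_erase.2 ⟨fun h => hu (h ▸ hd), hD.1 hd⟩,
    fun v hv => hD.2 v (mem_of_mem_erase hv)⟩

theorem DominatesOn.insert_of_erase (hD : DominatesOn G (s.erase u) D) (hz : z ∈ s)
    (hzu : z = u ∨ G.Adj z u) : DominatesOn G s (insert z D) := by
  refine ⟨insert_subset hz (hD.1.trans (erase_subset u s)), fun v hv => ?_⟩
  by_cases hvu : v = u
  · exact ⟨z, mem_insert_self z D, hvu ▸ hzu⟩
  · obtain ⟨d, hd, hdv⟩ := hD.2 v (mem_erase.2 ⟨hvu, hv⟩)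
    exact ⟨d, mem_insert_of_mem hd, hdv⟩

theorem DominatesOn.erase_erase (hD : DominatesOn G s D)
    (hu : ∀ v ∈ s, G.Adj u v → ∃ d ∈ D.erase u, d = v ∨ G.Adj d v) :
    DominatesOn G (s.erase u) (D.erase u) := by
  refine ⟨erase_subset_erase u hD.1, fun v hv => ?_⟩
  obtain ⟨hvu, hvs⟩ := mem_erase.1 hv
  obtain ⟨d, hd, hdv⟩ := hD.2 v hvs
  by_cases hdu : d = u
  · subst hdu
    exact hu v hvs (hdv.resolve_left (Ne.symm hvu))
  · exact ⟨d, mem_erase.2 ⟨hdu, hd⟩, hdv⟩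

theorem DominatesOn.notMem_of_card_lt (hD : DominatesOn G (s.erase u) D)
    (hlt : D.card < domNumOn G s) (hz : z ∈ s) (hzu : z = u ∨ G.Adj z u) : z ∉ D := by
  intro hzD
  have := domNumOn_le_card (hD.insert_of_erase hz hzu)
  rw [insert_eq_of_mem hzD] at this
  omega

theorem domNumOn_le_domNumOn_erase_add_one (hu : u ∈ s) :
    domNumOn G s ≤ domNumOn G (s.erase u) + 1 := by
  obtain ⟨D, hD, hDc⟩ := exists_dominatesOn_card_eq G (s.erase u)
  calc domNumOn G s ≤ (insert u D).card := domNumOn_le_card (hD.insert_of_erase hu (Or.inl rfl))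
    _ ≤ domNumOn G (s.erase u) + 1 := hDc ▸ card_insert_le u D

theorem HasUniqueMinDomOn.not_adj_of_domNumOn_erase_lt (hU : HasUniqueMinDomOn G s)
    (hu : u ∈ s) (hlt : domNumOn G (s.erase u) < domNumOn G s) (hz : z ∈ s) :
    ¬ G.Adj u z := by
  intro huz
  obtain ⟨M, hM, hMc⟩ := exists_dominatesOn_card_eq G (s.erase u)
  have huM : u ∉ M := fun h => (mem_erase.1 (hM.1 h)).1 rfl
  have hcard : ∀ a, (insert a M).card ≤ domNumOn G s := fun a =>
    (card_insert_le a M).trans (by omega)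
  have h := hU (hM.insert_of_erase hz (Or.inr huz.symm)) (hM.insert_of_erase hu (Or.inl rfl))
    (hcard z) (hcard u)
  rcases mem_insert.1 (h ▸ mem_insert_self u M) with h | h
  · exact huz.ne h
  · exact huM h

end Domination

section Leaf

variable {G : SimpleGraph V} {s D : Finset V} {u x : V}

/-- `u` is a pendant vertex of `G` and `x` is its support vertex. -/
def IsPendant (G : SimpleGraph V) (u x : V) : Prop :=
  G.Adj u x ∧ ∀ z, G.Adj u z → z = x

theorem DominatesOn.mem_or_mem_support (hD : DominatesOn G s D) (hu : u ∈ s)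
    (hleaf : ∀ z, G.Adj u z → z = x) : u ∈ D ∨ x ∈ D := by
  obtain ⟨d, hd, rfl | hdu⟩ := hD.2 u hu
  · exact Or.inl hd
  · exact Or.inr (hleaf d hdu.symm ▸ hd)

variable [DecidableEq V]

theorem DominatesOn.insert_erase_of_isPendant (hD : DominatesOn G s D) (hx : x ∈ s)
    (hl : IsPendant G u x) :
    DominatesOn G s (insert x (D.erase u)) := by
  refine ⟨insert_subset hx ((erase_subset u D).trans hD.1), fun v hv => ?_⟩
  by_cases hvu : v = u
  · exact ⟨x, mem_insert_self _ _, Or.inr (hvu ▸ hl.1.symm)⟩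
  obtain ⟨d, hd, hdv⟩ := hD.2 v hv
  by_cases hdu : d = u
  · subst hdu
    exact ⟨x, mem_insert_self _ _, Or.inl (hl.2 v (hdv.resolve_left (Ne.symm hvu))).symm⟩
  · exact ⟨d, mem_insert_of_mem (mem_erase.2 ⟨hdu, hd⟩), hdv⟩

theorem card_insert_erase_le (hu : u ∈ D) : (insert x (D.erase u)).card ≤ D.card :=
  (card_insert_le _ _).trans (card_erase_add_one hu).le

theorem notMem_insert_erase (hux : u ≠ x) : u ∉ insert x (D.erase u) := by
  simp [hux]

theorem HasUniqueMinDomOn.notMem_of_isPendant (hU : HasUniqueMinDomOn G s) (hx : x ∈ s)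
    (hl : IsPendant G u x) (hD : DominatesOn G s D)
    (hDc : D.card ≤ domNumOn G s) : u ∉ D := by
  intro hu
  have h := hU (hD.insert_erase_of_isPendant hx hl) hD ((card_insert_erase_le hu).trans hDc) hDc
  exact notMem_insert_erase hl.1.ne (h ▸ hu)

theorem HasUniqueMinDomOn.mem_of_isPendant (hU : HasUniqueMinDomOn G s) (hu : u ∈ s)
    (hx : x ∈ s) (hl : IsPendant G u x) (hD : DominatesOn G s D)
    (hDc : D.card ≤ domNumOn G s) : x ∈ D :=
  (hD.mem_or_mem_support hu hl.2).resolve_left (hU.notMem_of_isPendant hx hl hD hDc)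

theorem domNumOn_le_domNumOn_erase_support (hu : u ∈ s) (hx : x ∈ s) (hl : IsPendant G u x) :
    domNumOn G s ≤ domNumOn G (s.erase x) := by
  obtain ⟨R, hR, hRc⟩ := exists_dominatesOn_card_eq G (s.erase x)
  have huR : u ∈ R := (hR.mem_or_mem_support (mem_erase.2 ⟨hl.1.ne, hu⟩) hl.2).resolve_right
    fun h => notMem_erase x s (hR.1 h)
  have h := (hR.insert_of_erase hx (Or.inl rfl)).insert_erase_of_isPendant hx hl
  rw [erase_insert_of_ne hl.1.ne.symm, insert_idem] at h
  exact hRc ▸ (domNumOn_le_card h).trans (card_insert_erase_le huR)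

end Leaf

section Transfer

variable [Fintype V] {G : SimpleGraph V} {D : Finset V}

theorem dominatesOn_univ_iff : DominatesOn G univ D ↔ IsDomSet G D :=
  ⟨fun hD v => hD.2 v (mem_univ v), fun hD => ⟨subset_univ D, fun v _ => hD v⟩⟩

theorem domNum_eq_domNumOn_univ (G : SimpleGraph V) : domNum G = domNumOn G univ := by
  simp only [domNum, domNumOn, dominatesOn_univ_iff]

theorem isGammaSet_iff : IsGammaSet G D ↔ DominatesOn G univ D ∧ D.card = domNumOn G univ := by
  rw [IsGammaSet, dominatesOn_univ_iff, domNum_eq_domNumOn_univ]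

theorem hasUniqueMinDomOn_univ (hG : ∃! D, IsGammaSet G D) : HasUniqueMinDomOn G univ := by
  intro D₁ D₂ h₁ h₂ c₁ c₂
  have hγ : ∀ {D}, DominatesOn G univ D → D.card ≤ domNumOn G univ → IsGammaSet G D :=
    fun hD hc => isGammaSet_iff.2 ⟨hD, le_antisymm hc (domNumOn_le_card hD)⟩
  exact hG.unique (hγ h₁ c₁) (hγ h₂ c₂)

variable [DecidableEq V]

theorem map_subtype_ne_of_subset {y : V} (hD : D ⊆ univ.erase y) :
    (D.subtype (· ≠ y)).map (Function.Embedding.subtype _) = D := by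
  rw [subtype_map, filter_true_of_mem fun d hd => (mem_erase.1 (hD hd)).1]

theorem isDomSet_vdel_iff_s4 {y : V} {D : Finset {v // v ≠ y}} :
    IsDomSet (vdel G y) D ↔
      DominatesOn G (univ.erase y) (D.map (Function.Embedding.subtype _)) := by
  simp [IsDomSet, DominatesOn, vdel, subset_iff]
  exact fun _ _ hx _ => hx

theorem domNum_vdel (G : SimpleGraph V) (y : V) :
    domNum (vdel G y) = domNumOn G (univ.erase y) := by
  unfold domNum domNumOn
  congr 1
  ext n
  constructor
  · rintro ⟨D, hD, rfl⟩
    exact ⟨_, isDomSet_vdel_iff_s4.1 hD, card_map _⟩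
  · rintro ⟨D, hD, rfl⟩
    have hmap := map_subtype_ne_of_subset hD.1
    exact ⟨_, isDomSet_vdel_iff_s4.2 (by rwa [hmap]), by rw [← card_map, hmap]⟩

theorem hasUniqueMinDomOn_erase {y : V} (hG : ∃! D, IsGammaSet (vdel G y) D) :
    HasUniqueMinDomOn G (univ.erase y) := by
  intro D₁ D₂ h₁ h₂ c₁ c₂
  have hγ : ∀ {D}, DominatesOn G (univ.erase y) D → D.card ≤ domNumOn G (univ.erase y) →
      IsGammaSet (vdel G y) (D.subtype (· ≠ y)) := by
    intro D hD hc
    have hmap := map_subtype_ne_of_subset hD.1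
    have hdom : IsDomSet (vdel G y) (D.subtype (· ≠ y)) := isDomSet_vdel_iff_s4.2 (by rwa [hmap])
    refine ⟨hdom, le_antisymm ?_ (Nat.sInf_le ⟨_, hdom, rfl⟩)⟩
    rwa [domNum_vdel, ← card_map, hmap]
  rw [← map_subtype_ne_of_subset h₁.1, ← map_subtype_ne_of_subset h₂.1,
    hG.unique (hγ h₁ c₁) (hγ h₂ c₂)]

end Transfer

namespace HypoUD

variable [Fintype V] [DecidableEq V] {G : SimpleGraph V} {u x y : V}

theorem hasUniqueMinDomOn (h : HypoUD G) (y : V) : HasUniqueMinDomOn G (univ.erase y) :=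
  hasUniqueMinDomOn_erase (h.2 y)

theorem exists_adj (h : HypoUD G) (u : V) : ∃ z, G.Adj u z := by
  by_contra! hiso
  obtain ⟨D₁, D₂, h₁, h₂, hne⟩ := h.1
  rw [isGammaSet_iff] at h₁ h₂
  have hu : ∀ {D}, DominatesOn G univ D → u ∈ D := fun hD => by
    obtain ⟨d, hd, rfl | hdu⟩ := hD.2 u (mem_univ u)
    exacts [hd, absurd hdu.symm (hiso d)]
  have herase : ∀ {D}, DominatesOn G univ D → DominatesOn G (univ.erase u) (D.erase u) :=
    fun hD => hD.erase_erase fun v _ huv => absurd huv (hiso v)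
  have hle := domNumOn_le_domNumOn_erase_add_one (G := G) (mem_univ u)
  have hcard : ∀ {D}, DominatesOn G univ D → D.card = domNumOn G univ →
      (D.erase u).card ≤ domNumOn G (univ.erase u) := fun hD hc => by
    rw [card_erase_of_mem (hu hD)]
    omega
  apply hne
  rw [← insert_erase (hu h₁.1), ← insert_erase (hu h₂.1), h.hasUniqueMinDomOn u
    (herase h₁.1) (herase h₂.1) (hcard h₁.1 h₁.2) (hcard h₂.1 h₂.2)]

theorem domNumOn_le_domNumOn_erase_of_adj_support (h : HypoUD G) (hl : IsPendant G u x)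
    (hxy : G.Adj x y) (hyu : y ≠ u) :
    domNumOn G univ ≤ domNumOn G (univ.erase y) := by
  obtain ⟨S, hS, hSc⟩ := exists_dominatesOn_card_eq G (univ.erase y)
  have hxS : x ∈ S := (h.hasUniqueMinDomOn y).mem_of_isPendant
    (mem_erase.2 ⟨hyu.symm, mem_univ u⟩) (mem_erase.2 ⟨hxy.ne, mem_univ x⟩) hl hS hSc.le
  have hdom := hS.insert_of_erase (mem_univ x) (Or.inr hxy)
  rw [insert_eq_of_mem hxS] at hdom
  exact hSc ▸ domNumOn_le_card hdom

theorem domNumOn_erase_pendant_lt (h : HypoUD G) (hl : IsPendant G u x) (hxy : G.Adj x y)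
    (hyu : y ≠ u) : domNumOn G (univ.erase u) < domNumOn G univ := by
  by_contra! hle
  have hy := h.domNumOn_le_domNumOn_erase_of_adj_support hl hxy hyu
  obtain ⟨D, hD, hDc, huD⟩ :
      ∃ D, DominatesOn G univ D ∧ D.card = domNumOn G univ ∧ u ∈ D := by
    obtain ⟨D₁, D₂, h₁, h₂, hne⟩ := h.1
    rw [isGammaSet_iff] at h₁ h₂
    by_contra! hu
    exact hne (h.hasUniqueMinDomOn u (h₁.1.erase (hu D₁ h₁.1 h₁.2))
      (h₂.1.erase (hu D₂ h₂.1 h₂.2)) (h₁.2.trans_le hle) (h₂.2.trans_le hle))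
  have hE := hD.insert_erase_of_isPendant (mem_univ x) hl
  have hyD : y ∈ D.erase u := by
    by_contra hy'
    have hyD : y ∉ D := fun h' => hy' (mem_erase.2 ⟨hyu, h'⟩)
    have hyE : y ∉ insert x (D.erase u) := fun h' =>
      hy' ((mem_insert.1 h').resolve_left hxy.ne.symm)
    have := h.hasUniqueMinDomOn y (hE.erase hyE) (hD.erase hyD)
      ((card_insert_erase_le huD).trans (hDc.trans_le hy)) (hDc.trans_le hy)
    exact notMem_insert_erase hl.1.ne (this ▸ huD)
  have hlt := domNumOn_le_card
    (hD.erase_erase fun v _ huv => ⟨y, hyD, Or.inr (hl.2 v huv ▸ hxy.symm)⟩)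
  rw [card_erase_of_mem huD] at hlt
  have := card_pos.2 ⟨u, huD⟩
  omega

theorem domNumOn_erase_lt_of_notMem (h : HypoUD G) (hux : G.Adj u x) {T : Finset V}
    (hT : DominatesOn G (univ.erase u) T) (hlt : T.card < domNumOn G univ) {w : V} (hwT : w ∉ T)
    (hwu : w ≠ u) (hwx : w ≠ x) : domNumOn G (univ.erase w) < domNumOn G univ := by
  by_contra! hle
  have hA := hT.insert_of_erase (mem_univ u) (Or.inl rfl)
  have hB := hT.insert_of_erase (mem_univ x) (Or.inr hux.symm)
  have hcard : ∀ a, (insert a T).card ≤ domNumOn G (univ.erase w) := fun a =>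
    (card_insert_le a T).trans (by omega)
  have := h.hasUniqueMinDomOn w (hA.erase (by simp [hwu, hwT])) (hB.erase (by simp [hwx, hwT]))
    (hcard u) (hcard x)
  rcases mem_insert.1 (this ▸ mem_insert_self u T) with h | h
  · exact hux.ne h
  · exact notMem_erase u univ (hT.1 h)

theorem exists_notMem_ne_ne (h : HypoUD G) (hl : IsPendant G u x)
    (hxy : G.Adj x y) (hyu : y ≠ u) {T : Finset V} (hT : DominatesOn G (univ.erase u) T)
    (hTc : T.card = domNumOn G (univ.erase u)) (hlt : T.card < domNumOn G univ) :
    ∃ w, w ∉ T ∧ w ≠ u ∧ w ≠ x := by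
  have hxT : x ∉ T := hT.notMem_of_card_lt hlt (mem_univ x) (Or.inr hl.1.symm)
  have hyT : y ∈ T := by
    by_contra hyT
    exact (h.domNumOn_erase_lt_of_notMem hl.1 hT hlt hyT hyu hxy.ne.symm).not_ge
      (h.domNumOn_le_domNumOn_erase_of_adj_support hl hxy hyu)
  by_contra! hall
  have hT' : DominatesOn G (univ.erase u) (insert x (T.erase y)) := by
    refine ⟨insert_subset (mem_erase.2 ⟨hl.1.ne.symm, mem_univ x⟩)
      ((erase_subset y T).trans hT.1), fun v hv => ?_⟩
    by_cases hvx : v = x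
    · exact ⟨x, mem_insert_self _ _, Or.inl hvx.symm⟩
    by_cases hvy : v = y
    · exact ⟨x, mem_insert_self _ _, Or.inr (hvy ▸ hxy)⟩
    have hvT : v ∈ T := by
      by_contra hvT
      exact hvx (hall v hvT (mem_erase.1 hv).1)
    exact ⟨v, mem_insert_of_mem (mem_erase.2 ⟨hvy, hvT⟩), Or.inl rfl⟩
  have := h.hasUniqueMinDomOn u hT' hT ((card_insert_erase_le hyT).trans hTc.le) hTc.le
  exact hxT (this ▸ mem_insert_self x _)

/-- `R - x + u + w` is as large as the unique minimum dominating set `T + u` of `G - x` but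
differs from it, so it misses some `p`; inside `R + w` only `x` dominates `p`. -/
theorem exists_adj_support_notMem (h : HypoUD G) (hl : IsPendant G u x) {T : Finset V}
    (hT : DominatesOn G (univ.erase u) T) (hlt : T.card < domNumOn G univ)
    {w : V} (hwT : w ∉ T) (hwu : w ≠ u) (hwx : w ≠ x)
    {R : Finset V} (hR : DominatesOn G (univ.erase w) R) (hRc : R.card = domNumOn G (univ.erase w))
    (hRlt : R.card < domNumOn G univ) :
    ∃ p, G.Adj x p ∧ p ≠ u ∧ p ≠ w ∧ p ∉ R ∧ ¬ G.Adj w p := by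
  have hxT : x ∉ T := hT.notMem_of_card_lt hlt (mem_univ x) (Or.inr hl.1.symm)
  have hxR : x ∈ R := (h.hasUniqueMinDomOn w).mem_of_isPendant
    (mem_erase.2 ⟨hwu.symm, mem_univ u⟩) (mem_erase.2 ⟨hwx.symm, mem_univ x⟩) hl hR hRc.le
  have hγ := domNumOn_le_domNumOn_erase_support (G := G) (mem_univ u) (mem_univ x) hl
  set C := insert w (insert u (R.erase x))
  have hCx : C ⊆ univ.erase x := by
    simp [C, insert_subset_iff, hwx, hl.1.ne, erase_subset_erase x (subset_univ R)]
  have hCc : C.card ≤ domNumOn G univ :=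
    (card_insert_le _ _).trans (by have := card_insert_erase_le (x := u) hxR; omega)
  have hA := (hT.insert_of_erase (mem_univ u) (Or.inl rfl)).erase (u := x)
    (by simp [hl.1.ne.symm, hxT])
  have hAc : (insert u T).card ≤ domNumOn G univ := (card_insert_le u T).trans hlt
  obtain ⟨p, hp, hpC⟩ : ∃ p ∈ univ.erase x, ∀ d ∈ C, ¬(d = p ∨ G.Adj d p) := by
    by_contra hall
    have hCA := h.hasUniqueMinDomOn x ⟨hCx, fun v hv => ?_⟩ hA (hCc.trans hγ) (hAc.trans hγ)
    · have : w ∈ insert u T := hCA ▸ mem_insert_self _ _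
      simp [hwu, hwT] at this
    · by_contra hv'
      exact hall ⟨v, hv, fun d hd hdv => hv' ⟨d, hd, hdv⟩⟩
  obtain ⟨d, hd, hdp⟩ := (hR.insert_of_erase (mem_univ w) (Or.inl rfl)).2 p (mem_univ p)
  have hdx : d = x := by
    by_contra hdx
    refine hpC d ?_ hdp
    rcases mem_insert.1 hd with rfl | hdR
    · exact mem_insert_self _ _
    · exact mem_insert_of_mem (mem_insert_of_mem (mem_erase.2 ⟨hdx, hdR⟩))
  subst hdx
  refine ⟨p, hdp.resolve_left (mem_erase.1 hp).1.symm, fun hpu => hpC u ?_ (Or.inl hpu.symm),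
    fun hpw => hpC w (mem_insert_self _ _) (Or.inl hpw.symm), fun hpR => hpC p ?_ (Or.inl rfl),
    fun hwp => hpC w (mem_insert_self _ _) (Or.inr hwp)⟩
  · exact mem_insert_of_mem (mem_insert_self _ _)
  · exact mem_insert_of_mem (mem_insert_of_mem (mem_erase.2 ⟨(mem_erase.1 hp).1, hpR⟩))

theorem domNumOn_le_domNumOn_erase_pendant (h : HypoUD G) (hl : IsPendant G u x)
    (hxy : G.Adj x y) (hyu : y ≠ u) :
    domNumOn G univ ≤ domNumOn G (univ.erase u) := by
  by_contra! hlt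
  obtain ⟨T, hT, hTc⟩ := exists_dominatesOn_card_eq G (univ.erase u)
  rw [← hTc] at hlt
  obtain ⟨w, hwT, hwu, hwx⟩ := h.exists_notMem_ne_ne hl hxy hyu hT hTc hlt
  obtain ⟨R, hR, hRc⟩ := exists_dominatesOn_card_eq G (univ.erase w)
  have hRlt : R.card < domNumOn G univ :=
    hRc ▸ h.domNumOn_erase_lt_of_notMem hl.1 hT hlt hwT hwu hwx
  obtain ⟨p, hxp, hpu, hpw, hpR, hwp⟩ :=
    h.exists_adj_support_notMem hl hT hlt hwT hwu hwx hR hRc hRlt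
  obtain ⟨m, hmT, hmw⟩ := hT.2 w (mem_erase.2 ⟨hwu, mem_univ w⟩)
  replace hmw : G.Adj m w := hmw.resolve_left fun hmw => hwT (hmw ▸ hmT)
  -- `R + w` and `R + m` both dominate `G - p` with at most `γ(G) ≤ γ(G - p)` vertices.
  have hdom : ∀ z, (z = w ∨ G.Adj z w) → z ≠ p →
      DominatesOn G (univ.erase p) (insert z R) := fun z hz hzp =>
    (hR.insert_of_erase (mem_univ z) hz).erase (by simp [hzp.symm, hpR])
  have hcard : ∀ z, (insert z R).card ≤ domNumOn G (univ.erase p) := fun z =>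
    (card_insert_le z R).trans (hRlt.trans_le
      (h.domNumOn_le_domNumOn_erase_of_adj_support hl hxp hpu))
  have := h.hasUniqueMinDomOn p (hdom w (Or.inl rfl) hpw.symm)
    (hdom m (Or.inr hmw) fun hmp => hwp (hmp ▸ hmw.symm)) (hcard w) (hcard m)
  rcases mem_insert.1 (this ▸ mem_insert_self w R) with h | h
  · exact hmw.ne h.symm
  · exact notMem_erase w univ (hR.1 h)

theorem false_of_pendant (h : HypoUD G) (h3 : 3 ≤ Fintype.card V) (hl : IsPendant G u x) :
    False := by
  by_cases hY : ∃ y, G.Adj x y ∧ y ≠ u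
  · obtain ⟨y, hxy, hyu⟩ := hY
    exact (h.domNumOn_erase_pendant_lt hl hxy hyu).not_ge
      (h.domNumOn_le_domNumOn_erase_pendant hl hxy hyu)
  · push Not at hY
    obtain ⟨w, hwu, hwx⟩ := ENat.exists_ne_ne_of_three_le (by simpa using h3) u x
    obtain ⟨S, hS, hSc⟩ := exists_dominatesOn_card_eq G (univ.erase w)
    have hU := h.hasUniqueMinDomOn w
    have hu : u ∈ univ.erase w := mem_erase.2 ⟨hwu.symm, mem_univ u⟩
    have hx : x ∈ univ.erase w := mem_erase.2 ⟨hwx.symm, mem_univ x⟩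
    exact hU.notMem_of_isPendant hu ⟨hl.1.symm, hY⟩ hS hSc.le
      (hU.mem_of_isPendant hu hx hl hS hSc.le)

theorem neighborSet_not_subset_singleton (h : HypoUD G) (h3 : 3 ≤ Fintype.card V) (u x : V) :
    ¬ G.neighborSet u ⊆ {x} := by
  intro hsub
  have hleaf : ∀ z, G.Adj u z → z = x := fun z hz => hsub hz
  obtain ⟨z, hz⟩ := h.exists_adj u
  exact h.false_of_pendant h3 ⟨hleaf z hz ▸ hz, hleaf⟩

end HypoUD

theorem hypoUD_no_critical_after_deletion [Fintype V] [DecidableEq V]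
    (G : SimpleGraph V) (h : HypoUD G) (h3 : 3 ≤ Fintype.card V) :
    ∀ x : V, ∀ u : {w : V // w ≠ x},
      domNum (vdel G x) ≤ domNum (vdel (vdel G x) u) := by
  intro x u
  by_contra! hlt
  rw [domNum_vdel, domNum_eq_domNumOn_univ] at hlt
  refine h.neighborSet_not_subset_singleton h3 u x fun z hz => ?_
  by_contra hzx
  exact (hasUniqueMinDomOn_univ (h.2 x)).not_adj_of_domNumOn_erase_lt (mem_univ u) hlt
    (mem_univ _) (show (vdel G x).Adj u ⟨z, hzx⟩ from hz)
end

section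
/- If G is a hypo-unique-domination graph with γ(G) = 1, then G is isomorphic to K_2. -/
open SimpleGraph

variable {V : Type*}

theorem hypoUD_domNum_one [Fintype V] [DecidableEq V] (G : SimpleGraph V)
    (h : HypoUD G) (h1 : domNum G = 1) :
    Nonempty (G ≃g (⊤ : SimpleGraph (Fin 2))) := by
  classical
  obtain ⟨⟨D₁, D₂, ⟨hD₁, hc₁⟩, ⟨hD₂, hc₂⟩, hne⟩, huniq⟩ := h
  rw [h1] at hc₁ hc₂
  obtain ⟨u, rfl⟩ := Finset.card_eq_one.mp hc₁
  obtain ⟨v, rfl⟩ := Finset.card_eq_one.mp hc₂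
  have huv : u ≠ v := fun e => hne (by rw [e])
  -- u and v dominate everything
  have hu : ∀ w, u = w ∨ G.Adj u w := by
    intro w; obtain ⟨a, ha, h'⟩ := hD₁ w
    rwa [Finset.mem_singleton.mp ha] at h'
  have hv : ∀ w, v = w ∨ G.Adj v w := by
    intro w; obtain ⟨a, ha, h'⟩ := hD₂ w
    rwa [Finset.mem_singleton.mp ha] at h'
  have hadj : G.Adj u v := (hu v).resolve_left huv
  -- every vertex is u or v
  have dich : ∀ w : V, w = u ∨ w = v := by
    intro x
    by_contra hx
    push_neg at hx
    obtain ⟨hxu, hxv⟩ := hx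
    -- {u} and {v} are γ-sets of G - x
    have domu : IsDomSet (vdel G x) {⟨u, Ne.symm hxu⟩} := by
      rintro ⟨w, hw⟩
      refine ⟨⟨u, Ne.symm hxu⟩, Finset.mem_singleton_self _, ?_⟩
      rcases hu w with h' | h'
      · exact Or.inl (Subtype.ext h')
      · exact Or.inr h'
    have domv : IsDomSet (vdel G x) {⟨v, Ne.symm hxv⟩} := by
      rintro ⟨w, hw⟩
      refine ⟨⟨v, Ne.symm hxv⟩, Finset.mem_singleton_self _, ?_⟩
      rcases hv w with h' | h'
      · exact Or.inl (Subtype.ext h')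
      · exact Or.inr h'
    have hdn : domNum (vdel G x) = 1 := by
      have h1mem : (1 : ℕ) ∈ {n | ∃ D : Finset {u : V // u ≠ x}, IsDomSet (vdel G x) D ∧ D.card = n} :=
        ⟨{⟨u, Ne.symm hxu⟩}, domu, Finset.card_singleton _⟩
      refine le_antisymm (Nat.sInf_le h1mem) ?_
      rw [Nat.one_le_iff_ne_zero]
      intro h0
      rcases (Nat.sInf_eq_zero.mp h0) with h0' | h0'
      · obtain ⟨D, hD, hc⟩ := h0'
        rw [Finset.card_eq_zero] at hc
        subst hc
        obtain ⟨a, ha, _⟩ := hD ⟨u, Ne.symm hxu⟩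
        exact absurd ha (Finset.notMem_empty a)
      · exact absurd h1mem (by rw [h0']; exact fun h => h)
    obtain ⟨D, _, hDu⟩ := huniq x
    have e1 := hDu {⟨u, Ne.symm hxu⟩} ⟨domu, by rw [hdn]; exact Finset.card_singleton _⟩
    have e2 := hDu {⟨v, Ne.symm hxv⟩} ⟨domv, by rw [hdn]; exact Finset.card_singleton _⟩
    rw [← e2] at e1
    have := Finset.singleton_injective e1
    exact huv (congrArg Subtype.val this)
  -- build the iso
  have fadj : ∀ a b : V, G.Adj a b ↔ a ≠ b := by
    intro a b
    constructor
    · exact fun hab => hab.ne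
    · intro hab
      rcases dich a with rfl | rfl <;> rcases dich b with rfl | rfl
      · exact absurd rfl hab
      · exact hadj
      · exact hadj.symm
      · exact absurd rfl hab
  refine ⟨⟨⟨fun w => if w = u then 0 else 1, fun i => if i = 0 then u else v, ?_, ?_⟩, ?_⟩⟩
  · intro w
    rcases dich w with rfl | rfl
    · simp
    · simp [huv.symm]
  · intro i
    fin_cases i
    · simp
    · simp [huv.symm]
  · intro a b
    simp only [Equiv.coe_fn_mk, SimpleGraph.top_adj, fadj]
    rcases dich a with rfl | rfl <;> rcases dich b with rfl | rfl <;>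
      simp [huv, huv.symm]
end
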